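/- arXiv:2112.03082 — 8 statements merged into one kernel-verified Lean document; each statement's English description precedes it below -/
import Mathlib

section
/- Shrinking common-deadline instances from one side (Lemma 'ShrinkfromOneSide'): Let J be a speed-scaling instance in which all n jobs share a common deadline d, so job i has interval [r_i, d) and workload w_i. Let c ∈ (0,1] and, for each i, let c_i ∈ ℝ with c ≤ c_i ≤ 1, and let Ĵ be the instance in which job i has the same workload w_i, the same deadline d, and release time r̂_i = r_i + (1 − c_i)·(d − r_i). Then OPT(Ĵ) ≤ (1/c)^(α−1) · OPT(J). -/
open MeasureTheory
open scoped ENNReal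

/-- The discrete σ-algebra on `Option ι` (the job assignment takes values in a
countable/finite set of jobs plus "idle"). -/
instance optionMeasurableSpace {ι : Type*} : MeasurableSpace (Option ι) := ⊤

/-- A speed-scaling instance: each job `i` has release time `r i`, deadline `d i`
and workload `w i`. -/
structure SSInstance (ι : Type*) where
  r : ι → ℝ
  d : ι → ℝ
  w : ι → ℝ

/-- A schedule `(s, σ)` (measurable speed function together with a measurable job
assignment) is feasible for the instance `J`: each job is only executed inside its
interval `[r i, d i)` and its whole workload is processed. -/
def SSFeasible {ι : Type*} (J : SSInstance ι) (s : ℝ → ℝ) (σ : ℝ → Option ι) : Prop :=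
  Measurable s ∧ Measurable σ ∧ (∀ t, 0 ≤ s t) ∧
    ∀ i : ι, {t | σ t = some i} ⊆ Set.Ico (J.r i) (J.d i) ∧
      J.w i ≤ ∫ t in {t | σ t = some i}, s t

/-- Energy consumption `∫ s(t)^α dt` of a speed function. -/
noncomputable def SSEnergy (α : ℝ) (s : ℝ → ℝ) : ℝ≥0∞ :=
  ∫⁻ t, ENNReal.ofReal (s t ^ α)

/-- `OPT(J)`: the infimum of the energies of feasible schedules for instance `J`. -/
noncomputable def SSOpt (α : ℝ) {ι : Type*} (J : SSInstance ι) : ℝ≥0∞ :=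
  sInf {E | ∃ s σ, SSFeasible J s σ ∧ E = SSEnergy α s}

/-!
Compress time towards the common deadline: at time `u` run, `1 / c` times faster, what the
original schedule ran at time `d + (u - d) / c`. Job `i` is then processed only inside
`[d - c (d - r i), d) ⊆ [r̂ i, d)` (as `c ≤ c i`), with unchanged work. The power `s ^ α` grows
by `c ^ (-α)` while the time it is paid for shrinks by `c`, so the energy grows by `c ^ (1 - α)`.
-/

section AffineTimeChange

variable {a : ℝ} (b : ℝ)

theorem map_volume_mul_add (ha : a ≠ 0) :
    Measure.map (fun u : ℝ => a * u + b) volume = ENNReal.ofReal |a⁻¹| • volume := by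
  have hcomp : (fun u : ℝ => a * u + b) = (· + b) ∘ (a * ·) := rfl
  rw [hcomp, ← Measure.map_map (measurable_add_const b) (measurable_const_mul a),
    Real.map_volume_mul_left ha, Measure.map_smul, map_add_right_eq_self]

theorem lintegral_comp_mul_add {f : ℝ → ℝ≥0∞} (hf : Measurable f) (ha : a ≠ 0) :
    ∫⁻ u, f (a * u + b) = ENNReal.ofReal |a⁻¹| * ∫⁻ t, f t := by
  rw [← lintegral_map hf (by fun_prop), map_volume_mul_add b ha, lintegral_smul_measure,
    smul_eq_mul]

theorem setIntegral_preimage_mul_add {f : ℝ → ℝ} (hf : Measurable f) {A : Set ℝ}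
    (hA : MeasurableSet A) (ha : 0 < a) :
    ∫ u in (fun u => a * u + b) ⁻¹' A, a * f (a * u + b) = ∫ t in A, f t := by
  rw [integral_const_mul, ← setIntegral_map hA hf.aestronglyMeasurable (by fun_prop),
    map_volume_mul_add b ha.ne', Measure.restrict_smul, integral_smul_measure,
    ENNReal.toReal_ofReal (abs_nonneg _), abs_of_pos (inv_pos.2 ha), smul_eq_mul, ← mul_assoc,
    mul_inv_cancel₀ ha.ne', one_mul]

end AffineTimeChange

section TimeChangedSchedule

variable {a : ℝ} (b : ℝ) {ι : Type*}

theorem SSFeasible.comp_mul_add {J J' : SSInstance ι} {s : ℝ → ℝ} {σ : ℝ → Option ι}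
    (h : SSFeasible J s σ) (ha : 0 < a) (hw : ∀ i, J'.w i ≤ J.w i)
    (hwin : ∀ i u, a * u + b ∈ Set.Ico (J.r i) (J.d i) → u ∈ Set.Ico (J'.r i) (J'.d i)) :
    SSFeasible J' (fun u => a * s (a * u + b)) (fun u => σ (a * u + b)) := by
  obtain ⟨hs, hσ, hs0, hjobs⟩ := h
  refine ⟨by fun_prop, hσ.comp (by fun_prop), fun u => mul_nonneg ha.le (hs0 _), fun i => ?_⟩
  refine ⟨fun u hu => hwin i u ((hjobs i).1 hu), ?_⟩
  have hA : MeasurableSet {t | σ t = some i} := hσ (measurableSet_singleton (some i))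
  calc J'.w i ≤ J.w i := hw i
    _ ≤ ∫ t in {t | σ t = some i}, s t := (hjobs i).2
    _ = ∫ u in (fun u => a * u + b) ⁻¹' {t | σ t = some i}, a * s (a * u + b) :=
      (setIntegral_preimage_mul_add b hs hA ha).symm

theorem SSEnergy_comp_mul_add (α : ℝ) {s : ℝ → ℝ} (hs : Measurable s) (hs0 : ∀ t, 0 ≤ s t)
    (ha : 0 < a) :
    SSEnergy α (fun u => a * s (a * u + b)) = ENNReal.ofReal (a ^ (α - 1)) * SSEnergy α s := by
  have hpow : ∀ u, ENNReal.ofReal ((a * s u) ^ α) =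
      ENNReal.ofReal (a ^ α) * ENNReal.ofReal (s u ^ α) := fun u => by
    rw [Real.mul_rpow ha.le (hs0 u), ENNReal.ofReal_mul (by positivity)]
  simp only [SSEnergy, hpow]
  rw [lintegral_const_mul' _ _ ENNReal.ofReal_ne_top,
    lintegral_comp_mul_add b (f := fun t => ENNReal.ofReal (s t ^ α)) (by fun_prop) ha.ne',
    ← mul_assoc, ← ENNReal.ofReal_mul (by positivity), abs_of_pos (inv_pos.2 ha),
    Real.rpow_sub_one ha.ne', div_eq_mul_inv]

theorem SSOpt_le_of_comp_mul_add (α : ℝ) {J J' : SSInstance ι} (ha : 0 < a)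
    (hw : ∀ i, J'.w i ≤ J.w i)
    (hwin : ∀ i u, a * u + b ∈ Set.Ico (J.r i) (J.d i) → u ∈ Set.Ico (J'.r i) (J'.d i)) :
    SSOpt α J' ≤ ENNReal.ofReal (a ^ (α - 1)) * SSOpt α J := by
  have hK : ENNReal.ofReal (a ^ (α - 1)) ≠ 0 := by
    simpa using Real.rpow_pos_of_pos ha (α - 1)
  conv_rhs => rw [SSOpt, sInf_eq_iInf', ENNReal.mul_iInf_of_ne hK ENNReal.ofReal_ne_top]
  refine le_iInf ?_
  rintro ⟨_, s, σ, hfeas, rfl⟩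
  exact sInf_le ⟨_, _, hfeas.comp_mul_add b ha hw hwin,
    (SSEnergy_comp_mul_add b α hfeas.1 hfeas.2.2.1 ha).symm⟩

end TimeChangedSchedule

theorem shrink_from_one_side_general (α : ℝ) (n : ℕ)
    (r w : Fin n → ℝ) (d : ℝ) (c : ℝ) (ci : Fin n → ℝ)
    (hc0 : 0 < c) (hci : ∀ i, c ≤ ci i ∧ ci i ≤ 1) :
    SSOpt α (⟨fun i => r i + (1 - ci i) * (d - r i), fun _ => d, w⟩ : SSInstance (Fin n))
      ≤ ENNReal.ofReal ((1 / c) ^ (α - 1)) *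
        SSOpt α (⟨r, fun _ => d, w⟩ : SSInstance (Fin n)) := by
  rw [one_div]
  refine SSOpt_le_of_comp_mul_add (d - c⁻¹ * d) α (inv_pos.2 hc0) (fun _ => le_rfl) ?_
  rintro i u ⟨hr, hd⟩
  have htime : c⁻¹ * u + (d - c⁻¹ * d) = d + (u - d) / c := by ring
  rw [htime] at hr hd
  have hstart : (r i - d) * c ≤ u - d := (le_div_iff₀ hc0).1 (by linarith)
  have hend : u - d < 0 := by simpa using (div_lt_iff₀ hc0).1 (by linarith : (u - d) / c < 0)
  have hshrink : ci i * (r i - d) ≤ c * (r i - d) :=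
    mul_le_mul_of_nonpos_right (hci i).1 (by linarith)
  constructor <;> dsimp only <;> nlinarith

/-- **Lemma `ShrinkfromOneSide`.** Shrinking a common-deadline instance from one side:
if every job's release time is moved from `r i` to `r i + (1 - c i) * (d - r i)` with
`c ≤ c i ≤ 1`, the optimal energy increases by a factor of at most `(1/c)^(α-1)`. -/
theorem shrink_from_one_side (α : ℝ) (hα : 1 < α) (n : ℕ)
    (r w : Fin n → ℝ) (d : ℝ) (c : ℝ) (ci : Fin n → ℝ)
    (hrd : ∀ i, r i < d) (hw : ∀ i, 0 ≤ w i)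
    (hc0 : 0 < c) (hc1 : c ≤ 1) (hci : ∀ i, c ≤ ci i ∧ ci i ≤ 1) :
    SSOpt α (⟨fun i => r i + (1 - ci i) * (d - r i), fun _ => d, w⟩ : SSInstance (Fin n))
      ≤ ENNReal.ofReal ((1 / c) ^ (α - 1)) *
        SSOpt α (⟨r, fun _ => d, w⟩ : SSInstance (Fin n)) :=
  shrink_from_one_side_general α n r w d c ci hc0 hci
end

section
/- Symmetric shrinking of job intervals (Lemma 'ShrinkingRatio'): Let J be a speed-scaling instance with jobs having intervals [r_i, d_i) and workloads w_i, let c ∈ (0,1], and let Ĵ be the instance in which job i has the same workload w_i, release time r̂_i = r_i + ((1 − c)/2)·(d_i − r_i), and deadline d̂_i = d_i − ((1 − c)/2)·(d_i − r_i). Then OPT(Ĵ) ≤ (1/c)^(α−1) · OPT(J). -/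
open MeasureTheory
open scoped ENNReal

/-!
Fix a feasible schedule for `J` and let `A i` be the set of times at which it runs job `i`.
By Hölder, its energy on `A i` is at least `w i ^ α / |A i| ^ (α - 1)`. The homothety of ratio
`c` about the midpoint of `[r i, d i)` maps it onto the shrunk interval, and this gives
`c * |⋃ i ∈ T, [r i, d i)| ≤ |⋃ i ∈ T, [r̂ i, d̂ i)|` for every set `T` of jobs. Hence the
demands `c * |A i|` satisfy Hall's condition in the shrunk windows, and the earliest-deadline-first
greedy allocation yields disjoint `B i ⊆ [r̂ i, d̂ i)` with `|B i| ≥ c * |A i|`. Running job `i`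
at constant speed `w i / |B i|` on `B i` costs `w i ^ α / |B i| ^ (α - 1)`, at most
`(1 / c) ^ (α - 1)` times the lower bound above.
-/

open Set Function

section Intervals

variable {ι : Type*} {c : ℝ}

def shrunkIco (c r d : ℝ) : Set ℝ := Ico (r + (1 - c) / 2 * (d - r)) (d - (1 - c) / 2 * (d - r))

lemma homothety_mem_shrunkIco (hc : 0 < c) {r d x : ℝ} (hx : x ∈ Ico r d) :
    AffineMap.homothety ((r + d) / 2) c x ∈ shrunkIco c r d := by
  simp only [shrunkIco, AffineMap.homothety_apply, vsub_eq_sub, vadd_eq_add, smul_eq_mul,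
    mem_Ico] at hx ⊢
  constructor <;> nlinarith [hx.1, hx.2]

lemma homothety_notMem_shrunkIco (hc0 : 0 ≤ c) (hc1 : c ≤ 1) {r d r' d' x : ℝ} (hr : r' ≤ r)
    (hx : x ∈ Ico r d) (hx' : x ∉ Ico r' d') :
    AffineMap.homothety ((r + d) / 2) c x ∉ shrunkIco c r' d' := by
  have hd' : d' ≤ x := not_lt.1 fun h => hx' ⟨hr.trans hx.1, h⟩
  simp only [shrunkIco, AffineMap.homothety_apply, vsub_eq_sub, vadd_eq_add, smul_eq_mul,
    mem_Ico] at hx ⊢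
  intro h
  nlinarith [mul_nonneg (sub_nonneg.2 hc1) (sub_nonneg.2 hr),
    mul_nonneg (sub_nonneg.2 hc1) (sub_nonneg.2 hx.2.le), mul_nonneg hc0 (sub_nonneg.2 hd')]

theorem ofReal_mul_volume_biUnion_Ico_le (hc0 : 0 < c) (hc1 : c ≤ 1) (r d : ι → ℝ)
    (S : Finset ι) :
    ENNReal.ofReal c * volume (⋃ i ∈ S, Ico (r i) (d i)) ≤
      volume (⋃ i ∈ S, shrunkIco c (r i) (d i)) := by
  classical
  induction S using Finset.induction_on_max_value r with
  | empty => simp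
  | insert a S haS hmax ih =>
    set U := ⋃ i ∈ S, Ico (r i) (d i)
    set Û := ⋃ i ∈ S, shrunkIco c (r i) (d i)
    -- `a` has the latest release time, so the homothety shrinking `[r a, d a)` sends the part
    -- of it not covered by `U` outside `Û`.
    have himage : AffineMap.homothety ((r a + d a) / 2) c '' (Ico (r a) (d a) \ U) ⊆
        shrunkIco c (r a) (d a) \ Û := by
      rintro _ ⟨x, ⟨hx, hxU⟩, rfl⟩
      refine ⟨homothety_mem_shrunkIco hc0 hx, ?_⟩
      simp only [Û, mem_iUnion, not_exists]
      exact fun j hj => homothety_notMem_shrunkIco hc0.le hc1 (hmax j hj) hx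
        fun h => hxU (mem_biUnion hj h)
    have hvol : ENNReal.ofReal c * volume (Ico (r a) (d a) \ U) ≤
        volume (shrunkIco c (r a) (d a) \ Û) := by
      calc _ = volume (AffineMap.homothety ((r a + d a) / 2) c '' (Ico (r a) (d a) \ U)) := by
            rw [Measure.addHaar_image_homothety, Module.finrank_self, pow_one, abs_of_pos hc0]
        _ ≤ _ := measure_mono himage
    have hU : MeasurableSet U := Finset.measurableSet_biUnion S fun _ _ => measurableSet_Ico
    have hÛ : MeasurableSet Û := Finset.measurableSet_biUnion S fun _ _ => measurableSet_Ico
    simp only [Finset.set_biUnion_insert]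
    rw [union_comm, ← measure_add_sdiff hU.nullMeasurableSet, union_comm,
      ← measure_add_sdiff hÛ.nullMeasurableSet, mul_add]
    exact add_le_add ih hvol

end Intervals

section Allocation

lemma exists_volume_inter_Iio_eq {S : Set ℝ} {a a' : ℝ} (hS : S ⊆ Ico a a') {b : ℝ≥0∞}
    (hb : b ≤ volume S) : ∃ τ, volume (S ∩ Iio τ) = b := by
  have hSfin : volume S ≠ ⊤ := ((measure_mono hS).trans_lt measure_Ico_lt_top).ne
  have hfin (τ : ℝ) : volume (S ∩ Iio τ) ≠ ⊤ :=
    ne_top_of_le_ne_top hSfin (measure_mono inter_subset_left)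
  set g : ℝ → ℝ := fun τ => (volume (S ∩ Iio τ)).toReal
  have hg : LipschitzWith 1 g := by
    refine LipschitzWith.of_le_add_mul 1 fun x y => ?_
    rcases le_total x y with hxy | hyx
    · calc g x ≤ g y := ENNReal.toReal_mono (hfin y)
            (measure_mono (inter_subset_inter_right _ (Iio_subset_Iio hxy)))
        _ ≤ g y + 1 * dist x y := le_add_of_nonneg_right (by positivity)
    · have hsub : S ∩ Iio x ⊆ (S ∩ Iio y) ∪ Ico y x := fun t ⟨htS, htx⟩ =>
        (lt_or_ge t y).imp (fun hty => ⟨htS, hty⟩) fun hyt => ⟨hyt, htx⟩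
      calc g x ≤ (volume (S ∩ Iio y) + volume (Ico y x)).toReal :=
            ENNReal.toReal_mono (by simp [hfin y])
              ((measure_mono hsub).trans (measure_union_le _ _))
        _ = g y + 1 * dist x y := by
            rw [ENNReal.toReal_add (hfin y) measure_Ico_lt_top.ne, Real.volume_Ico,
              ENNReal.toReal_ofReal (sub_nonneg.2 hyx), one_mul, Real.dist_eq,
              abs_of_nonneg (sub_nonneg.2 hyx)]
  have hga : g a = 0 := by
    simp [g, show S ∩ Iio a = ∅ from
      eq_empty_of_forall_notMem fun t ⟨htS, hta⟩ => not_lt_of_ge (hS htS).1 hta]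
  have hga' : g a' = (volume S).toReal := by
    simp only [g, inter_eq_left.2 (show S ⊆ Iio a' from fun t ht => (hS ht).2)]
  obtain ⟨τ, -, hτ⟩ := intermediate_value_uIcc hg.continuous.continuousOn
    (show b.toReal ∈ uIcc (g a) (g a') by
      rw [hga, hga', uIcc_of_le ENNReal.toReal_nonneg]
      exact ⟨ENNReal.toReal_nonneg, ENNReal.toReal_mono hSfin hb⟩)
  exact ⟨τ, (ENNReal.toReal_eq_toReal_iff' (hfin τ) (ne_top_of_le_ne_top hSfin hb)).1 hτ⟩

theorem exists_pairwiseDisjoint_of_hall {ι : Type*} [DecidableEq ι] (u v : ι → ℝ)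
    (b : ι → ℝ≥0∞) (S : Finset ι) {F : Set ℝ} (hF : MeasurableSet F)
    (hall : ∀ T ⊆ S, ∑ i ∈ T, b i ≤ volume (F ∩ ⋃ i ∈ T, Ico (u i) (v i))) :
    ∃ B : ι → Set ℝ, (∀ i ∈ S, MeasurableSet (B i) ∧ B i ⊆ F ∩ Ico (u i) (v i) ∧
      b i ≤ volume (B i)) ∧ (S : Set ι).PairwiseDisjoint B := by
  induction S using Finset.induction_on_min_value v generalizing F with
  | empty => exact ⟨fun _ => ∅, by simp, by simp⟩
  | insert a S haS hmin ih =>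
    have hba : b a ≤ volume (F ∩ Ico (u a) (v a)) := by
      simpa using hall {a} (by simp)
    -- `a` has the earliest deadline and takes the earliest available part `B₀` of its window.
    -- If a window of `T` starts before `τ`, it covers the rest of `a`'s window and Hall's
    -- condition for `insert a T` pays for `B₀`; otherwise `B₀` misses every window of `T`.
    obtain ⟨τ, hτ⟩ := exists_volume_inter_Iio_eq (inter_subset_right (s := F)) hba
    set B₀ := F ∩ Ico (u a) (v a) ∩ Iio τ
    have hB₀ : MeasurableSet B₀ := (hF.inter measurableSet_Ico).inter measurableSet_Iio
    have hbfin : b a ≠ ⊤ :=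
      ne_top_of_le_ne_top (measure_mono inter_subset_right |>.trans_lt measure_Ico_lt_top).ne hba
    have hall' : ∀ T ⊆ S, ∑ i ∈ T, b i ≤ volume ((F \ B₀) ∩ ⋃ i ∈ T, Ico (u i) (v i)) := by
      intro T hT
      have haT : a ∉ T := fun h => haS (hT h)
      by_cases hτT : ∃ j ∈ T, u j ≤ τ
      · obtain ⟨j, hjT, hj⟩ := hτT
        have hcover : F ∩ ⋃ i ∈ insert a T, Ico (u i) (v i) ⊆
            B₀ ∪ (F \ B₀) ∩ ⋃ i ∈ T, Ico (u i) (v i) := by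
          rintro x ⟨hxF, hx⟩
          by_cases hxB : x ∈ B₀
          · exact Or.inl hxB
          refine Or.inr ⟨⟨hxF, hxB⟩, ?_⟩
          rw [Finset.set_biUnion_insert] at hx
          rcases hx with hxa | hxU
          · have hτx : τ ≤ x := not_lt.1 fun hxτ => hxB ⟨⟨hxF, hxa⟩, hxτ⟩
            exact mem_iUnion₂.2 ⟨j, hjT, hj.trans hτx, hxa.2.trans_le (hmin j (hT hjT))⟩
          · exact hxU
        have hinsert := (hall (insert a T) (Finset.insert_subset_insert a hT)).trans
          ((measure_mono hcover).trans (measure_union_le _ _))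
        rw [Finset.sum_insert haT, hτ] at hinsert
        exact (ENNReal.add_le_add_iff_left hbfin).1 hinsert
      · push Not at hτT
        refine (hall T (hT.trans (Finset.subset_insert a S))).trans (measure_mono ?_)
        rintro x ⟨hxF, hx⟩
        obtain ⟨j, hjT, hxj⟩ := mem_iUnion₂.1 hx
        exact ⟨⟨hxF, fun hxB => (hτT j hjT).not_ge (hxj.1.trans hxB.2.le)⟩, hx⟩
    obtain ⟨B, hB, hBdisj⟩ := ih (hF.diff hB₀) hall'
    have hBne : ∀ i ∈ S, update B a B₀ i = B i := fun i hi =>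
      update_of_ne (ne_of_mem_of_not_mem hi haS) _ _
    refine ⟨update B a B₀, fun i hi => ?_, ?_⟩
    · rcases Finset.mem_insert.1 hi with rfl | hi
      · simp only [update_self]
        exact ⟨hB₀, inter_subset_left, hτ.ge⟩
      · obtain ⟨hBm, hBsub, hBb⟩ := hB i hi
        rw [hBne i hi]
        exact ⟨hBm, hBsub.trans (inter_subset_inter_left _ sdiff_subset), hBb⟩
    · rw [Finset.coe_insert]
      refine PairwiseDisjoint.insert (fun i hi j hj hij => ?_) fun j hj _ => ?_
      · simpa only [onFun, hBne i hi, hBne j hj] using hBdisj hi hj hij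
      · rw [update_self, hBne j hj]
        exact disjoint_sdiff_right.mono_right ((hB j hj).2.1.trans inter_subset_left)

end Allocation

section Energy

lemma ofReal_integral_rpow_le {X : Type*} [MeasurableSpace X] {μ : Measure X} {p : ℝ} (hp : 1 < p)
    {f : X → ℝ} (hf : AEMeasurable f μ) (hf0 : ∀ x, 0 ≤ f x) :
    ENNReal.ofReal ((∫ x, f x ∂μ) ^ p) ≤
      (∫⁻ x, ENNReal.ofReal (f x ^ p) ∂μ) * μ univ ^ (p - 1) := by
  have hp0 : 0 < p := one_pos.trans hp
  have hint : ENNReal.ofReal (∫ x, f x ∂μ) ≤ ∫⁻ x, ENNReal.ofReal (f x) ∂μ := by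
    rw [integral_eq_lintegral_of_nonneg_ae (.of_forall hf0) hf.aestronglyMeasurable]
    exact ENNReal.ofReal_toReal_le
  have hholder := ENNReal.lintegral_mul_le_Lp_mul_Lq μ (Real.HolderConjugate.conjExponent hp)
    hf.ennreal_ofReal aemeasurable_const (g := fun _ => 1)
  have hpow (x : X) : ENNReal.ofReal (f x) ^ p = ENNReal.ofReal (f x ^ p) :=
    ENNReal.ofReal_rpow_of_nonneg (hf0 x) hp0.le
  simp only [Pi.mul_apply, mul_one, ENNReal.one_rpow, lintegral_const, one_mul, hpow] at hholder
  rw [← ENNReal.ofReal_rpow_of_nonneg (integral_nonneg hf0) hp0.le]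
  calc ENNReal.ofReal (∫ x, f x ∂μ) ^ p
      ≤ ((∫⁻ x, ENNReal.ofReal (f x ^ p) ∂μ) ^ (1 / p) * μ univ ^ (1 / p.conjExponent)) ^ p :=
        ENNReal.rpow_le_rpow (hint.trans hholder) hp0.le
    _ = (∫⁻ x, ENNReal.ofReal (f x ^ p) ∂μ) * μ univ ^ (p - 1) := by
        rw [ENNReal.mul_rpow_of_nonneg _ _ hp0.le, ← ENNReal.rpow_mul, ← ENNReal.rpow_mul,
          one_div_mul_cancel hp0.ne', ENNReal.rpow_one, Real.conjExponent]
        congr 2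
        field_simp

lemma exists_const_speed_energy_le {X : Type*} [MeasurableSpace X] {μ : Measure X}
    {α c w : ℝ} (hα : 1 < α) (hc : 0 < c) (hw : 0 ≤ w) {s : X → ℝ} (hs : Measurable s)
    (hs0 : ∀ t, 0 ≤ s t) {A B : Set X} (hwA : w ≤ ∫ t in A, s t ∂μ) (hB : μ B ≠ ⊤)
    (hAB : ENNReal.ofReal c * μ A ≤ μ B) :
    ∃ v, 0 ≤ v ∧ w ≤ v * μ.real B ∧ ENNReal.ofReal (v ^ α) * μ B ≤
      ENNReal.ofReal ((1 / c) ^ (α - 1)) * ∫⁻ t in A, ENNReal.ofReal (s t ^ α) ∂μ := by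
  have hα0 : 0 < α := one_pos.trans hα
  by_cases hB0 : μ B = 0
  · have hA0 : μ A = 0 := by
      simpa [hB0, hc.not_ge] using hAB
    refine ⟨0, le_rfl, ?_, by simp [hB0]⟩
    simpa [Measure.restrict_eq_zero.2 hA0] using hwA
  set x := μ.real B
  have hx : 0 < x := ENNReal.toReal_pos hB0 hB
  have hBx : μ B = ENNReal.ofReal x := (ENNReal.ofReal_toReal hB).symm
  refine ⟨w / x, by positivity, (div_mul_cancel₀ w hx.ne').ge, ?_⟩
  have hAx : μ A ≤ ENNReal.ofReal (x / c) := by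
    rw [ENNReal.ofReal_div_of_pos hc, ← hBx]
    exact ENNReal.le_div_iff_mul_le (.inl (by simpa using hc)) (.inl ENNReal.ofReal_ne_top)
      |>.2 (mul_comm (μ A) _ ▸ hAB)
  have hcancel : ENNReal.ofReal ((w / x) ^ α) * μ B * ENNReal.ofReal (x ^ (α - 1)) =
      ENNReal.ofReal (w ^ α) := by
    rw [hBx, ← ENNReal.ofReal_mul (by positivity), ← ENNReal.ofReal_mul (by positivity),
      Real.rpow_sub_one hx.ne', Real.div_rpow hw hx.le]
    congr 1
    field_simp
  have hholder := ofReal_integral_rpow_le hα hs.aemeasurable hs0 (μ := μ.restrict A)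
  rw [Measure.restrict_apply_univ] at hholder
  have hx0 : ENNReal.ofReal (x ^ (α - 1)) ≠ 0 := by
    simpa using Real.rpow_pos_of_pos hx _
  refine (ENNReal.mul_le_mul_iff_left hx0 ENNReal.ofReal_ne_top).1 ?_
  rw [hcancel]
  calc ENNReal.ofReal (w ^ α)
      ≤ ENNReal.ofReal ((∫ t in A, s t ∂μ) ^ α) :=
        ENNReal.ofReal_le_ofReal (Real.rpow_le_rpow hw hwA hα0.le)
    _ ≤ (∫⁻ t in A, ENNReal.ofReal (s t ^ α) ∂μ) * μ A ^ (α - 1) := hholder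
    _ ≤ (∫⁻ t in A, ENNReal.ofReal (s t ^ α) ∂μ) * ENNReal.ofReal ((x / c) ^ (α - 1)) := by
        rw [← ENNReal.ofReal_rpow_of_nonneg (by positivity) (by linarith)]
        gcongr
    _ = _ := by
        rw [div_eq_mul_one_div x, Real.mul_rpow hx.le (by positivity),
          ENNReal.ofReal_mul (by positivity)]
        ring

end Energy

section Schedules

variable {ι : Type*} {α : ℝ}

noncomputable def SSInstance.shrink (c : ℝ) (J : SSInstance ι) : SSInstance ι where
  r i := J.r i + (1 - c) / 2 * (J.d i - J.r i)
  d i := J.d i - (1 - c) / 2 * (J.d i - J.r i)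
  w := J.w

lemma SSOpt_le_mul_SSOpt {ι' : Type*} (J : SSInstance ι) (J' : SSInstance ι') {k : ℝ≥0∞}
    (hk0 : k ≠ 0) (hk : k ≠ ⊤) (h : ∀ s σ, SSFeasible J s σ → SSOpt α J' ≤ k * SSEnergy α s) :
    SSOpt α J' ≤ k * SSOpt α J := by
  rw [mul_comm, ← ENNReal.div_le_iff hk0 hk]
  refine le_sInf ?_
  rintro _ ⟨s, σ, hs, rfl⟩
  exact (ENNReal.div_le_iff hk0 hk).2 (mul_comm k _ ▸ h s σ hs)

lemma exists_measurable_fiber_eq {X : Type*} [MeasurableSpace X] [Countable ι] {B : ι → Set X}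
    (hB : ∀ i, MeasurableSet (B i)) (hBdisj : Pairwise (Disjoint on B)) :
    ∃ σ : X → Option ι, Measurable σ ∧ ∀ i, {t | σ t = some i} = B i := by
  classical
  set σ : X → Option ι := fun t => if h : ∃ i, t ∈ B i then some h.choose else none
  have hfiber (i : ι) : {t | σ t = some i} = B i := by
    ext t
    by_cases h : ∃ i, t ∈ B i
    · simp only [σ, mem_ofPred_eq, dif_pos h, Option.some.injEq]
      refine ⟨fun hi => hi ▸ h.choose_spec, fun ht => ?_⟩
      by_contra hne
      exact disjoint_left.1 (hBdisj hne) h.choose_spec ht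
    · simp only [σ, mem_ofPred_eq, dif_neg h, reduceCtorEq, false_iff]
      exact fun ht => h ⟨i, ht⟩
  refine ⟨σ, measurable_to_countable' fun o => ?_, hfiber⟩
  cases o with
  | some i =>
    change MeasurableSet {t | σ t = some i}
    exact hfiber i ▸ hB i
  | none =>
    have : σ ⁻¹' {none} = (⋃ i, B i)ᶜ := by
      ext t
      simp [σ]
    exact this ▸ (MeasurableSet.iUnion hB).compl

lemma SSOpt_le_sum_of_pairwiseDisjoint [Fintype ι] (hα : 0 < α) (J : SSInstance ι)
    {B : ι → Set ℝ} (hB : ∀ i, MeasurableSet (B i)) (hBdisj : Pairwise (Disjoint on B))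
    (hBJ : ∀ i, B i ⊆ Ico (J.r i) (J.d i)) {v : ι → ℝ} (hv : ∀ i, 0 ≤ v i)
    (hwv : ∀ i, J.w i ≤ v i * volume.real (B i)) :
    SSOpt α J ≤ ∑ i, ENNReal.ofReal (v i ^ α) * volume (B i) := by
  obtain ⟨σ, hσ, hfiber⟩ := exists_measurable_fiber_eq hB hBdisj
  set s : ℝ → ℝ := fun t => (σ t).elim 0 v
  have hs_of_mem {i t} (ht : t ∈ B i) : s t = v i := by
    rw [← hfiber i, mem_ofPred_eq] at ht
    simp only [s, ht, Option.elim_some]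
  have hfeas : SSFeasible J s σ := by
    refine ⟨(measurable_from_top (f := fun o : Option ι => o.elim 0 v)).comp hσ, hσ, fun t => ?_,
      fun i => ⟨(hfiber i).trans_subset (hBJ i), ?_⟩⟩
    · change 0 ≤ (σ t).elim 0 v
      cases σ t with
      | none => exact le_rfl
      | some i => exact hv i
    · rw [hfiber i, setIntegral_congr_fun (hB i) fun t ht => hs_of_mem ht, setIntegral_const,
        smul_eq_mul, mul_comm]
      exact hwv i
  have hsupport : (fun t => ENNReal.ofReal (s t ^ α)).support ⊆ ⋃ i, B i := by
    refine support_subset_iff'.2 fun t ht => ?_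
    change ENNReal.ofReal ((σ t).elim 0 v ^ α) = 0
    cases hσt : σ t with
    | none => simp [Real.zero_rpow hα.ne']
    | some i => exact absurd (mem_iUnion.2 ⟨i, hfiber i ▸ hσt⟩) ht
  calc SSOpt α J ≤ SSEnergy α s := sInf_le ⟨s, σ, hfeas, rfl⟩
    _ = ∑ i, ENNReal.ofReal (v i ^ α) * volume (B i) := by
      rw [SSEnergy, ← setLIntegral_eq_of_support_subset hsupport, lintegral_iUnion hB hBdisj,
        tsum_fintype]
      refine Finset.sum_congr rfl fun i _ => ?_
      rw [setLIntegral_congr_fun (hB i) fun t ht => by rw [hs_of_mem ht], setLIntegral_const]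

theorem SSOpt_shrink_le_mul_SSEnergy [Fintype ι] {c : ℝ} (hα : 1 < α) (hc0 : 0 < c)
    (hc1 : c ≤ 1) (J : SSInstance ι) (hw : ∀ i, 0 ≤ J.w i) {s : ℝ → ℝ} {σ : ℝ → Option ι}
    (h : SSFeasible J s σ) :
    SSOpt α (J.shrink c) ≤ ENNReal.ofReal ((1 / c) ^ (α - 1)) * SSEnergy α s := by
  classical
  obtain ⟨hs, hσ, hs0, hjobs⟩ := h
  set A : ι → Set ℝ := fun i => {t | σ t = some i}
  have hA (i : ι) : MeasurableSet (A i) := hσ (MeasurableSpace.measurableSet_top (s := {some i}))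
  have hAdisj : Pairwise (Disjoint on A) := fun i j hij =>
    disjoint_left.2 fun t hi hj => hij (Option.some_injective _ (hi.symm.trans hj))
  have hall : ∀ T ⊆ Finset.univ, ∑ i ∈ T, ENNReal.ofReal c * volume (A i) ≤
      volume (univ ∩ ⋃ i ∈ T, Ico ((J.shrink c).r i) ((J.shrink c).d i)) := by
    intro T _
    rw [univ_inter, ← Finset.mul_sum,
      ← measure_biUnion_finset (hAdisj.set_pairwise _) fun i _ => hA i]
    exact (mul_le_mul_right (measure_mono (iUnion₂_mono fun i _ => (hjobs i).1)) _).trans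
      (ofReal_mul_volume_biUnion_Ico_le hc0 hc1 J.r J.d T)
  obtain ⟨B, hB, hBdisj⟩ := exists_pairwiseDisjoint_of_hall _ _ _ _ MeasurableSet.univ hall
  simp only [Finset.mem_univ, true_implies, univ_inter] at hB
  choose v hv0 hwv hvE using fun i => exists_const_speed_energy_le hα hc0 (hw i) hs hs0
    (hjobs i).2 ((measure_mono (hB i).2.1).trans_lt measure_Ico_lt_top).ne (hB i).2.2
  calc SSOpt α (J.shrink c) ≤ ∑ i, ENNReal.ofReal (v i ^ α) * volume (B i) :=
        SSOpt_le_sum_of_pairwiseDisjoint (one_pos.trans hα) _ (fun i => (hB i).1)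
          (pairwise_univ.1 (Finset.coe_univ (α := ι) ▸ hBdisj)) (fun i => (hB i).2.1) hv0 hwv
    _ ≤ ∑ i, ENNReal.ofReal ((1 / c) ^ (α - 1)) * ∫⁻ t in A i, ENNReal.ofReal (s t ^ α) :=
        Finset.sum_le_sum fun i _ => hvE i
    _ = ENNReal.ofReal ((1 / c) ^ (α - 1)) * ∫⁻ t in ⋃ i, A i, ENNReal.ofReal (s t ^ α) := by
        rw [← Finset.mul_sum, lintegral_iUnion hA hAdisj, tsum_fintype]
    _ ≤ ENNReal.ofReal ((1 / c) ^ (α - 1)) * SSEnergy α s :=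
        mul_le_mul_right (setLIntegral_le_lintegral _ _) _

end Schedules

theorem shrinking_ratio_general (α : ℝ) (hα : 1 < α) (n : ℕ)
    (r d w : Fin n → ℝ) (c : ℝ)
    (hw : ∀ i, 0 ≤ w i)
    (hc0 : 0 < c) (hc1 : c ≤ 1) :
    SSOpt α (⟨fun i => r i + (1 - c) / 2 * (d i - r i),
              fun i => d i - (1 - c) / 2 * (d i - r i), w⟩ : SSInstance (Fin n))
      ≤ ENNReal.ofReal ((1 / c) ^ (α - 1)) *
        SSOpt α (⟨r, d, w⟩ : SSInstance (Fin n)) :=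
  SSOpt_le_mul_SSOpt _ _ (ENNReal.ofReal_pos.2 (by positivity)).ne' ENNReal.ofReal_ne_top
    fun _ _ h => SSOpt_shrink_le_mul_SSEnergy hα hc0 hc1 ⟨r, d, w⟩ hw h

/-- **Lemma `ShrinkingRatio`.** Symmetrically shrinking every job interval
`[r i, d i)` to `[r i + ((1-c)/2)(d i - r i), d i - ((1-c)/2)(d i - r i))` increases
the optimal energy by a factor of at most `(1/c)^(α-1)`. -/
theorem shrinking_ratio (α : ℝ) (hα : 1 < α) (n : ℕ)
    (r d w : Fin n → ℝ) (c : ℝ)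
    (hrd : ∀ i, r i < d i) (hw : ∀ i, 0 ≤ w i)
    (hc0 : 0 < c) (hc1 : c ≤ 1) :
    SSOpt α (⟨fun i => r i + (1 - c) / 2 * (d i - r i),
              fun i => d i - (1 - c) / 2 * (d i - r i), w⟩ : SSInstance (Fin n))
      ≤ ENNReal.ofReal ((1 / c) ^ (α - 1)) *
        SSOpt α (⟨r, d, w⟩ : SSInstance (Fin n)) :=
  shrinking_ratio_general α hα n r d w c hw hc0 hc1
end

section
/- Energy of the shrunk predicted instance for common deadlines (Corollary 'CD_shrunkPredictionError'): Let 0 ≤ η ≤ λ < 1. Consider n jobs with workloads w_i ≥ 0 sharing a common deadline d, with actual release times r_i < d and predicted release times p_i < d satisfying |p_i − r_i| ≤ η·(d − p_i). Let p'_i = ⌊p_i + λ·(d − p_i)⌋, let J_{P'} be the instance in which job i has interval [p'_i, d) and workload w_i, and J_R the instance in which job i has interval [r_i, d) and workload w_i. Then OPT(J_{P'}) ≤ ((1 + η)/(1 − λ))^(α−1) · OPT(J_R). -/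
open MeasureTheory
open scoped ENNReal

/-!
Dilating time by the factor `c = (1 - λ) / (1 + η)` about the common deadline `d` maps every
actual window `[r_i, d)` into the shrunk predicted window `[p'_i, d)`, because
`d - p'_i ≥ (1 - λ)(d - p_i) ≥ c (d - r_i)` by the prediction-error bound. Replaying any feasible
schedule for `J_R` on the dilated time axis at speed divided by `c` processes the same work,
and its energy is `c · c^(-α) = ((1 + η) / (1 - λ))^(α - 1)` times the original.
-/

open AffineMap

section Homothety

variable {c : ℝ}

lemma measurable_homothety (z c : ℝ) : Measurable (homothety z c : ℝ → ℝ) :=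
  (homothety z c).continuous_of_finiteDimensional.measurable

lemma strictMono_homothety (z : ℝ) (hc : 0 < c) : StrictMono (homothety z c : ℝ → ℝ) := by
  intro s t hst
  simp only [homothety_apply, vsub_eq_sub, vadd_eq_add, smul_eq_mul]
  gcongr

lemma homothety_homothety_inv (z : ℝ) (hc : c ≠ 0) (t : ℝ) :
    homothety z c (homothety z c⁻¹ t) = t := by
  simp only [homothety_apply, vsub_eq_sub, vadd_eq_add, smul_eq_mul]
  field_simp
  ring

lemma map_homothety_volume (z : ℝ) (hc : c ≠ 0) :
    (volume : Measure ℝ).map (homothety z c) = ENNReal.ofReal |c⁻¹| • volume := by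
  have hsplit : (homothety z c : ℝ → ℝ) = (· + (z - c * z)) ∘ (c * ·) := by
    ext t
    simp only [homothety_apply, vsub_eq_sub, vadd_eq_add, smul_eq_mul, Function.comp_apply]
    ring
  rw [hsplit, ← Measure.map_map (measurable_add_const _) (measurable_const_mul c),
    Real.map_volume_mul_left hc, Measure.map_smul, map_add_right_eq_self]

lemma lintegral_comp_homothety (z : ℝ) (hc : c ≠ 0) {f : ℝ → ℝ≥0∞} (hf : Measurable f) :
    ∫⁻ t, f (homothety z c t) = ENNReal.ofReal |c⁻¹| * ∫⁻ t, f t := by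
  rw [← lintegral_map hf (measurable_homothety z c), map_homothety_volume z hc,
    lintegral_smul_measure, smul_eq_mul]

lemma setIntegral_comp_homothety (z : ℝ) (hc : c ≠ 0) {f : ℝ → ℝ} (hf : Measurable f)
    {A : Set ℝ} (hA : MeasurableSet A) :
    ∫ t in homothety z c ⁻¹' A, f (homothety z c t) = |c⁻¹| * ∫ t in A, f t := by
  rw [← integral_map (measurable_homothety z c).aemeasurable hf.aestronglyMeasurable,
    ← Measure.restrict_map (measurable_homothety z c) hA, map_homothety_volume z hc,
    Measure.restrict_smul, integral_smul_measure, ENNReal.toReal_ofReal (abs_nonneg _),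
    smul_eq_mul]

end Homothety

section Stretch

variable {ι : Type*} {z c : ℝ} {s : ℝ → ℝ} {σ : ℝ → Option ι}

/-- The speed profile `s` replayed on the time axis stretched by the factor `c` about `z`:
what `s` does at time `u` now happens at time `z + c (u - z)`, at `1 / c` of the speed. -/
noncomputable def stretchSpeed (z c : ℝ) (s : ℝ → ℝ) : ℝ → ℝ :=
  fun t => c⁻¹ * s (homothety z c⁻¹ t)

lemma ssEnergy_stretchSpeed (α : ℝ) (hc : 0 < c) (hs : Measurable s) (hs0 : ∀ t, 0 ≤ s t) :
    SSEnergy α (stretchSpeed z c s) = ENNReal.ofReal (c ^ (1 - α)) * SSEnergy α s := by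
  have hpow : ∀ t, ENNReal.ofReal (stretchSpeed z c s t ^ α)
      = ENNReal.ofReal (c⁻¹ ^ α) * ENNReal.ofReal (s (homothety z c⁻¹ t) ^ α) := fun t => by
    rw [stretchSpeed, Real.mul_rpow (inv_nonneg.2 hc.le) (hs0 _),
      ENNReal.ofReal_mul (Real.rpow_nonneg (inv_nonneg.2 hc.le) _)]
  have hmeas : Measurable fun t => ENNReal.ofReal (s t ^ α) :=
    ENNReal.measurable_ofReal.comp (hs.pow_const α)
  have hconst : c⁻¹ ^ α * |c⁻¹⁻¹| = c ^ (1 - α) := by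
    rw [inv_inv, abs_of_pos hc, Real.inv_rpow hc.le, Real.rpow_sub hc, Real.rpow_one,
      inv_mul_eq_div]
  simp only [SSEnergy, hpow]
  rw [lintegral_const_mul' _ _ ENNReal.ofReal_ne_top,
    lintegral_comp_homothety z (inv_ne_zero hc.ne') hmeas, ← mul_assoc,
    ← ENNReal.ofReal_mul (Real.rpow_nonneg (inv_nonneg.2 hc.le) _), hconst]

lemma SSFeasible.stretch {J J' : SSInstance ι} (h : SSFeasible J s σ) (hc : 0 < c)
    (hr : ∀ i, J'.r i ≤ homothety z c (J.r i)) (hd : ∀ i, homothety z c (J.d i) ≤ J'.d i)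
    (hw : ∀ i, J'.w i ≤ J.w i) :
    SSFeasible J' (stretchSpeed z c s) (σ ∘ homothety z c⁻¹) := by
  obtain ⟨hs, hσ, hs0, hjobs⟩ := h
  have hφ := measurable_homothety z c⁻¹
  refine ⟨(hs.comp hφ).const_mul _, hσ.comp hφ,
    fun t => mul_nonneg (inv_nonneg.2 hc.le) (hs0 _), fun i => ⟨?_, ?_⟩⟩
  · intro t ht
    obtain ⟨hlo, hhi⟩ := (hjobs i).1 ht
    have hmono := strictMono_homothety z hc
    rw [← homothety_homothety_inv z hc.ne' t]
    exact ⟨(hr i).trans (hmono.monotone hlo), (hmono hhi).trans_le (hd i)⟩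
  · have hA : MeasurableSet {u | σ u = some i} := hσ (measurableSet_singleton (some i))
    calc J'.w i ≤ J.w i := hw i
      _ ≤ ∫ u in {u | σ u = some i}, s u := (hjobs i).2
      _ = ∫ t in homothety z c⁻¹ ⁻¹' {u | σ u = some i}, stretchSpeed z c s t := by
        simp only [stretchSpeed]
        rw [integral_const_mul,
          setIntegral_comp_homothety z (inv_ne_zero hc.ne') hs hA, inv_inv, abs_of_pos hc,
          inv_mul_cancel_left₀ hc.ne']

theorem ssOpt_le_of_stretch (α : ℝ) {J J' : SSInstance ι} (hc : 0 < c)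
    (hr : ∀ i, J'.r i ≤ homothety z c (J.r i)) (hd : ∀ i, homothety z c (J.d i) ≤ J'.d i)
    (hw : ∀ i, J'.w i ≤ J.w i) :
    SSOpt α J' ≤ ENNReal.ofReal (c ^ (1 - α)) * SSOpt α J := by
  have hK0 : ENNReal.ofReal (c ^ (1 - α)) ≠ 0 := by
    simpa using Real.rpow_pos_of_pos hc (1 - α)
  rw [← ENNReal.div_le_iff' hK0 ENNReal.ofReal_ne_top]
  refine le_sInf ?_
  rintro _ ⟨s, σ, hfeas, rfl⟩
  rw [ENNReal.div_le_iff' hK0 ENNReal.ofReal_ne_top,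
    ← ssEnergy_stretchSpeed α hc hfeas.1 hfeas.2.2.1]
  exact sInf_le ⟨_, _, hfeas.stretch hc hr hd hw, rfl⟩

end Stretch

theorem cd_shrunk_prediction_error_general (α : ℝ) (n : ℕ)
    (r p w : Fin n → ℝ) (d : ℝ) (η lam : ℝ)
    (hη0 : 0 ≤ η) (hlam : lam < 1)
    (hp : ∀ i, |p i - r i| ≤ η * (d - p i)) :
    SSOpt α (⟨fun i => (⌊p i + lam * (d - p i)⌋ : ℤ), fun _ => d, w⟩ : SSInstance (Fin n))
      ≤ ENNReal.ofReal (((1 + η) / (1 - lam)) ^ (α - 1)) *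
        SSOpt α (⟨r, fun _ => d, w⟩ : SSInstance (Fin n)) := by
  set c := (1 - lam) / (1 + η) with hc_def
  have hc : 0 < c := div_pos (by linarith) (by linarith)
  have hconst : ((1 + η) / (1 - lam)) ^ (α - 1) = c ^ (1 - α) := by
    rw [← inv_div, Real.inv_rpow hc.le, ← Real.rpow_neg hc.le, neg_sub]
  rw [hconst]
  refine ssOpt_le_of_stretch α (z := d) hc (fun i => ?_) (fun _ => by simp) (fun _ => le_rfl)
  have hwindow : d - r i ≤ (1 + η) * (d - p i) := by linarith [le_abs_self (p i - r i), hp i]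
  calc ((⌊p i + lam * (d - p i)⌋ : ℤ) : ℝ) ≤ p i + lam * (d - p i) := Int.floor_le _
    _ = d - c * ((1 + η) * (d - p i)) := by
      rw [hc_def]
      field_simp
      ring
    _ ≤ d - c * (d - r i) := by gcongr
    _ = homothety d c (r i) := by
      simp only [homothety_apply, vsub_eq_sub, vadd_eq_add, smul_eq_mul]
      ring

/-- **Corollary `CD_shrunkPredictionError`.** For common-deadline instances with
`0 ≤ η ≤ λ < 1` and predictions within error `η`, the optimal energy of the shrunk
predicted instance `J_{P'}` (with release times `⌊p_i + λ(d-p_i)⌋`) is at most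
`((1+η)/(1-λ))^(α-1)` times that of the actual instance `J_R`. -/
theorem cd_shrunk_prediction_error (α : ℝ) (hα : 1 < α) (n : ℕ)
    (r p w : Fin n → ℝ) (d : ℝ) (η lam : ℝ)
    (hη0 : 0 ≤ η) (hηlam : η ≤ lam) (hlam : lam < 1)
    (hw : ∀ i, 0 ≤ w i) (hrd : ∀ i, r i < d) (hpd : ∀ i, p i < d)
    (hp : ∀ i, |p i - r i| ≤ η * (d - p i)) :
    SSOpt α (⟨fun i => (⌊p i + lam * (d - p i)⌋ : ℤ), fun _ => d, w⟩ : SSInstance (Fin n))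
      ≤ ENNReal.ofReal (((1 + η) / (1 - lam)) ^ (α - 1)) *
        SSOpt α (⟨r, fun _ => d, w⟩ : SSInstance (Fin n)) :=
  cd_shrunk_prediction_error_general α n r p w d η lam hη0 hlam hp
end

section
/- Combining feasible schedules (Lemma 'merge'): Let J be a speed-scaling instance whose job index set is partitioned into m parts J_1, …, J_m, and for each k ∈ {1, …, m} let (s_k, σ_k) be a feasible schedule for the sub-instance consisting of the jobs of J_k (with their release times, deadlines and workloads from J), with energy E_k = ∫ (s_k t)^α dt. Then there exists a feasible schedule for the full instance J whose speed function is s(t) = Σ_{k=1}^m s_k(t), and its energy satisfies ∫ (Σ_{k=1}^m s_k t)^α dt ≤ m^(α−1) · Σ_{k=1}^m E_k. -/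
/-!
A feasible schedule of speed `S = ∑ k, s k` is obtained by time sharing. Let `A i` be the set of
times at which the schedule of the part of job `i` runs `i`, and cut the time line into the cells
of the Venn diagram of the `A i`. The jobs present in one cell belong to distinct parts, so the
cell has `S dt`-measure at least the sum of the works `s_k dt` they receive there. As `S dt` has
no atoms, the intermediate value theorem for `x ↦ (S dt)(E ∩ Iic x)` carves the cell into
disjoint pieces of exactly these measures, and job `i` is run on the union of its pieces. The
energy bound is the pointwise power-mean inequality `(∑ k, x k) ^ α ≤ m ^ (α - 1) * ∑ k, x k ^ α`.
-/

open MeasureTheory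
open scoped ENNReal

open Set Function Filter Topology

theorem continuous_measureReal_Iic {μ : Measure ℝ} [IsFiniteMeasure μ] [NullSingletonClass μ] :
    Continuous fun x => μ.real (Iic x) := by
  have h : ∀ a : ℝ, ContinuousOn (fun x => μ.real (Iic x)) (Iic a) := fun a => by
    simpa using
      (integrableOn_const (C := (1 : ℝ)) (μ := μ) (s := Iic a)).continuousOn_Iic_primitive_Iic
  exact continuous_iff_continuousAt.2 fun x =>
    (h (x + 1)).continuousAt (Iic_mem_nhds (lt_add_one x))

theorem tendsto_measureReal_Iic_atBot (μ : Measure ℝ) [IsFiniteMeasure μ] :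
    Tendsto (fun x => μ.real (Iic x)) atBot (𝓝 0) := by
  have h := tendsto_measure_iInter_atBot (μ := μ)
    (fun x : ℝ => measurableSet_Iic.nullMeasurableSet) monotone_Iic ⟨0, measure_ne_top _ _⟩
  rw [iInter_Iic_eq_empty_iff.2 (by simp), measure_empty] at h
  exact (ENNReal.tendsto_toReal ENNReal.zero_ne_top).comp h

theorem tendsto_measureReal_Iic_atTop (μ : Measure ℝ) [IsFiniteMeasure μ] :
    Tendsto (fun x => μ.real (Iic x)) atTop (𝓝 (μ.real univ)) :=
  (ENNReal.tendsto_toReal (measure_ne_top _ _)).comp (tendsto_measure_Iic_atTop μ)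

theorem exists_subset_measure_eq {μ : Measure ℝ} [SigmaFinite μ] [NullSingletonClass μ]
    {E : Set ℝ} (hE : MeasurableSet E) {r : ℝ≥0∞} (hr : r ≤ μ E) (hr_top : r ≠ ∞) :
    ∃ F ⊆ E, MeasurableSet F ∧ μ F = r := by
  rcases eq_or_ne r 0 with rfl | hr₀
  · exact ⟨∅, empty_subset E, .empty, measure_empty⟩
  rcases hr.eq_or_lt with rfl | hlt
  · exact ⟨E, subset_rfl, hE, rfl⟩
  obtain ⟨t, ht, htE, hrt, ht_top⟩ := Measure.exists_subset_measure_lt_top hE hlt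
  have : IsFiniteMeasure (μ.restrict t) := isFiniteMeasure_restrict.2 ht_top.ne
  have hrt' : r.toReal < (μ.restrict t).real univ := by
    rwa [measureReal_def, Measure.restrict_apply_univ, ENNReal.toReal_lt_toReal hr_top ht_top.ne]
  have hr₀' : 0 < r.toReal := ENNReal.toReal_pos hr₀ hr_top
  obtain ⟨x, hx⟩ := mem_range_of_exists_le_of_exists_ge continuous_measureReal_Iic
    ((tendsto_measureReal_Iic_atBot _).eventually (ge_mem_nhds hr₀')).exists
    ((tendsto_measureReal_Iic_atTop _).eventually (le_mem_nhds hrt')).exists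
  have hfin : μ (t ∩ Iic x) ≠ ∞ := ((measure_mono inter_subset_left).trans_lt ht_top).ne
  refine ⟨t ∩ Iic x, inter_subset_left.trans htE, ht.inter measurableSet_Iic, ?_⟩
  rwa [← ENNReal.toReal_eq_toReal_iff' hfin hr_top, inter_comm,
    ← Measure.restrict_apply measurableSet_Iic]

theorem exists_pairwiseDisjoint_subsets_measure_eq {ι : Type*} [DecidableEq ι]
    {μ : Measure ℝ} [SigmaFinite μ] [NullSingletonClass μ] (T : Finset ι) (c : ι → ℝ≥0∞)
    (hc : ∀ i ∈ T, c i ≠ ∞) {E : Set ℝ} (hE : MeasurableSet E) (hsum : ∑ i ∈ T, c i ≤ μ E) :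
    ∃ F : ι → Set ℝ, (∀ i ∈ T, F i ⊆ E ∧ MeasurableSet (F i) ∧ μ (F i) = c i) ∧
      (T : Set ι).PairwiseDisjoint F := by
  induction T using Finset.induction_on generalizing E with
  | empty => exact ⟨fun _ => ∅, by simp, by simp⟩
  | @insert a T ha ih =>
    rw [Finset.sum_insert ha] at hsum
    have hca := hc a (Finset.mem_insert_self a T)
    obtain ⟨Fa, hFaE, hFa, hμFa⟩ := exists_subset_measure_eq hE (le_self_add.trans hsum) hca
    have hrest : ∑ i ∈ T, c i ≤ μ (E \ Fa) := by
      rw [measure_sdiff hFaE hFa.nullMeasurableSet (hμFa ▸ hca), hμFa]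
      exact ENNReal.le_sub_of_add_le_left hca hsum
    obtain ⟨F, hF, hFdisj⟩ :=
      ih (fun i hi => hc i (Finset.mem_insert_of_mem hi)) (hE.diff hFa) hrest
    have hupd : ∀ i ∈ T, update F a Fa i = F i := fun i hi =>
      update_of_ne (ne_of_mem_of_not_mem hi ha) _ _
    refine ⟨update F a Fa, fun i hi => ?_, ?_⟩
    · rcases Finset.mem_insert.1 hi with rfl | hi
      · simpa using ⟨hFaE, hFa, hμFa⟩
      · rw [hupd i hi]
        exact ⟨(hF i hi).1.trans sdiff_subset, (hF i hi).2⟩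
    · rw [Finset.coe_insert]
      refine PairwiseDisjoint.insert_of_notMem (fun i hi j hj hij => ?_) ha fun j hj => ?_
      · rw [onFun, hupd i hi, hupd j hj]
        exact hFdisj hi hj hij
      · rw [update_self, hupd j hj]
        exact disjoint_sdiff_right.mono_right (hF j hj).1

section VennCell

variable {X ι : Type*} (A : ι → Set X)

def vennCell (c : Finset ι) : Set X := ⋂ i, {x | x ∈ A i ↔ i ∈ c}

variable {A}

@[simp]
theorem mem_vennCell {c : Finset ι} {x : X} : x ∈ vennCell A c ↔ ∀ i, x ∈ A i ↔ i ∈ c := by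
  simp [vennCell]

theorem vennCell_subset {c : Finset ι} {i : ι} (hi : i ∈ c) : vennCell A c ⊆ A i :=
  fun _ hx => (mem_vennCell.1 hx i).2 hi

theorem pairwise_disjoint_vennCell : Pairwise (Disjoint on (vennCell A)) := by
  intro c c' hcc'
  refine Set.disjoint_left.2 fun x hx hx' => hcc' (Finset.ext fun i => ?_)
  rw [← mem_vennCell.1 hx i, mem_vennCell.1 hx' i]

theorem measurableSet_vennCell [MeasurableSpace X] [Countable ι]
    (hA : ∀ i, MeasurableSet (A i)) (c : Finset ι) : MeasurableSet (vennCell A c) := by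
  refine MeasurableSet.iInter fun i => ?_
  by_cases hi : i ∈ c
  · simp only [hi, iff_true]
    exact hA i
  · simp only [hi, iff_false]
    exact (hA i).compl

theorem biUnion_vennCell [Fintype ι] [DecidableEq ι] (i : ι) :
    ⋃ c ∈ Finset.univ.filter (i ∈ ·), vennCell A c = A i := by
  classical
  refine Subset.antisymm
    (iUnion₂_subset fun c hc => vennCell_subset (Finset.mem_filter.1 hc).2) fun x hx =>
      mem_biUnion (x := Finset.univ.filter (x ∈ A ·)) (by simpa using hx) (by simp)

end VennCell

theorem sum_measure_vennCell_le {K ι : Type*} [Fintype K] {X : Type*} [MeasurableSpace X]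
    {ν : K → Measure X} {μ : Measure X} (hνμ : ∑ k, ν k ≤ μ) {p : ι → K} {A : ι → Set X}
    (hA : ∀ i j, p i = p j → i ≠ j → Disjoint (A i) (A j)) (c : Finset ι) :
    ∑ i ∈ c, ν (p i) (vennCell A c) ≤ μ (vennCell A c) := by
  classical
  rcases (vennCell A c).eq_empty_or_nonempty with hempty | ⟨x, hx⟩
  · simp [hempty]
  have hp : Set.InjOn p c := fun i hi j hj hij => by
    by_contra hne
    exact Set.disjoint_left.1 (hA i j hij hne) (vennCell_subset hi hx) (vennCell_subset hj hx)
  calc ∑ i ∈ c, ν (p i) (vennCell A c) = ∑ k ∈ c.image p, ν k (vennCell A c) :=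
        (Finset.sum_image (f := fun k => ν k (vennCell A c)) hp).symm
    _ ≤ ∑ k, ν k (vennCell A c) := Finset.sum_le_sum_of_subset (Finset.subset_univ _)
    _ = (∑ k, ν k) (vennCell A c) := (Measure.finsetSum_apply _ _ _).symm
    _ ≤ μ (vennCell A c) := hνμ _

theorem exists_pairwise_disjoint_subsets_measure_eq_of_sum_le {K ι : Type*} [Fintype K]
    [Fintype ι] {μ : Measure ℝ} [SigmaFinite μ] [NullSingletonClass μ]
    {ν : K → Measure ℝ} (hνμ : ∑ k, ν k ≤ μ) {p : ι → K} {A : ι → Set ℝ}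
    (hAm : ∀ i, MeasurableSet (A i)) (hA : ∀ i j, p i = p j → i ≠ j → Disjoint (A i) (A j))
    (hfin : ∀ i, ν (p i) (A i) ≠ ∞) :
    ∃ B : ι → Set ℝ, (∀ i, B i ⊆ A i ∧ MeasurableSet (B i) ∧ μ (B i) = ν (p i) (A i)) ∧
      Pairwise (Disjoint on B) := by
  classical
  have hcarve (c : Finset ι) : ∃ F : ι → Set ℝ, (∀ i ∈ c, F i ⊆ vennCell A c ∧
      MeasurableSet (F i) ∧ μ (F i) = ν (p i) (vennCell A c)) ∧ (c : Set ι).PairwiseDisjoint F :=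
    exists_pairwiseDisjoint_subsets_measure_eq c _
      (fun i hi => ne_top_of_le_ne_top (hfin i) (measure_mono (vennCell_subset hi)))
      (measurableSet_vennCell hAm c) (sum_measure_vennCell_le hνμ hA c)
  choose F hF hFdisj using hcarve
  have hFcell {i : ι} {c : Finset ι} (hc : c ∈ Finset.univ.filter (i ∈ ·)) :=
    hF c i (Finset.mem_filter.1 hc).2
  have hFi (i : ι) :
      ((Finset.univ.filter (i ∈ ·) : Finset (Finset ι)) : Set _).PairwiseDisjoint (F · i) :=
    fun c hc c' hc' hcc' =>
    (pairwise_disjoint_vennCell hcc').mono (hFcell hc).1 (hFcell hc').1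
  refine ⟨fun i => ⋃ c ∈ Finset.univ.filter (i ∈ ·), F c i, fun i => ⟨?_, ?_, ?_⟩, ?_⟩
  · exact iUnion₂_subset fun c hc =>
      (hFcell hc).1.trans (vennCell_subset (Finset.mem_filter.1 hc).2)
  · exact Finset.measurableSet_biUnion _ fun c hc => (hFcell hc).2.1
  · conv_rhs => rw [← biUnion_vennCell (A := A) i]
    rw [measure_biUnion_finset (hFi i) fun c hc => (hFcell hc).2.1,
      measure_biUnion_finset (fun c _ c' _ h => pairwise_disjoint_vennCell h)
        fun c _ => measurableSet_vennCell hAm c]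
    exact Finset.sum_congr rfl fun c hc => (hFcell hc).2.2
  · intro i j hij
    simp only [onFun, disjoint_iUnion_left, disjoint_iUnion_right]
    intro c' hc' c hc
    rcases eq_or_ne c c' with rfl | hcc'
    · exact hFdisj c (Finset.mem_filter.1 hc).2 (Finset.mem_filter.1 hc').2 hij
    · exact (pairwise_disjoint_vennCell hcc').mono (hFcell hc).1 (hFcell hc').1

theorem disjoint_setOf_eq_some {X ι K : Type*} {P : ι → K}
    (σ : (k : K) → X → Option {i // P i = k}) {i j : ι} (h : P i = P j) (hij : i ≠ j) :
    Disjoint {x | σ (P i) x = some ⟨i, rfl⟩} {x | σ (P j) x = some ⟨j, rfl⟩} := by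
  refine Set.disjoint_left.2 fun x hi hj => hij ?_
  have hi' : (σ (P i) x).map Subtype.val = some i := by rw [show σ (P i) x = _ from hi]; rfl
  have hj' : (σ (P j) x).map Subtype.val = some j := by rw [show σ (P j) x = _ from hj]; rfl
  rw [h, hj'] at hi'
  exact (Option.some_injective _ hi').symm

theorem exists_measurable_preimage_some_eq {X ι : Type*} [MeasurableSpace X] [Countable ι]
    {B : ι → Set X} (hB : ∀ i, MeasurableSet (B i)) (hdisj : Pairwise (Disjoint on B)) :
    ∃ σ : X → Option ι, Measurable σ ∧ ∀ i, {x | σ x = some i} = B i := by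
  classical
  let σ : X → Option ι := fun x => if h : ∃ j, x ∈ B j then some h.choose else none
  have hsome (i : ι) : σ ⁻¹' {some i} = B i := by
    ext x
    by_cases h : ∃ j, x ∈ B j
    · have hchoose : ∀ i, x ∈ B i → h.choose = i := fun i hi => by
        by_contra hne
        exact Set.disjoint_left.1 (hdisj hne) h.choose_spec hi
      simp only [σ, dif_pos h, mem_preimage, mem_singleton_iff, Option.some_inj]
      exact ⟨fun hi => hi ▸ h.choose_spec, hchoose i⟩
    · simpa [σ, h] using fun hx => h ⟨i, hx⟩
  have hnone : σ ⁻¹' {none} = (⋃ j, B j)ᶜ := by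
    ext x
    by_cases h : ∃ j, x ∈ B j
    · simp [σ, h]
    · simpa [σ, h] using not_exists.1 h
  refine ⟨σ, measurable_to_countable' fun o => ?_, hsome⟩
  cases o with
  | some i => exact hsome i ▸ hB i
  | none => exact hnone ▸ (MeasurableSet.iUnion hB).compl

theorem setIntegral_eq_toReal_withDensity {X : Type*} [MeasurableSpace X] {μ : Measure X}
    {f : X → ℝ} (hf : Measurable f) (hf₀ : ∀ x, 0 ≤ f x) {E : Set X} (hE : MeasurableSet E) :
    ∫ x in E, f x ∂μ = (μ.withDensity (fun x => ENNReal.ofReal (f x)) E).toReal := by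
  rw [withDensity_apply _ hE,
    integral_eq_lintegral_of_nonneg_ae (ae_of_all _ hf₀) hf.aestronglyMeasurable]

theorem withDensity_ofReal_sum {X K : Type*} [MeasurableSpace X] (μ : Measure X) (T : Finset K)
    {f : K → X → ℝ} (hf : ∀ k, Measurable (f k)) (hf₀ : ∀ k x, 0 ≤ f k x) :
    μ.withDensity (fun x => ENNReal.ofReal (∑ k ∈ T, f k x)) =
      ∑ k ∈ T, μ.withDensity fun x => ENNReal.ofReal (f k x) := by
  ext E hE
  simp only [Measure.finsetSum_apply, withDensity_apply _ hE,
    ENNReal.ofReal_sum_of_nonneg fun k _ => hf₀ k _]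
  exact lintegral_finsetSum _ fun k _ => (hf k).ennreal_ofReal

theorem ssEnergy_sum_le {K : Type*} [Fintype K] {α : ℝ} (hα : 1 ≤ α) {s : K → ℝ → ℝ}
    (hs : ∀ k, Measurable (s k)) (hs₀ : ∀ k t, 0 ≤ s k t) :
    SSEnergy α (fun t => ∑ k, s k t) ≤
      ENNReal.ofReal ((Fintype.card K : ℝ) ^ (α - 1)) * ∑ k, SSEnergy α (s k) := by
  have hpow (t : ℝ) : ENNReal.ofReal ((∑ k, s k t) ^ α) ≤
      ENNReal.ofReal ((Fintype.card K : ℝ) ^ (α - 1)) * ∑ k, ENNReal.ofReal (s k t ^ α) := by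
    rw [← ENNReal.ofReal_sum_of_nonneg fun k _ => Real.rpow_nonneg (hs₀ k t) α,
      ← ENNReal.ofReal_mul (by positivity)]
    exact ENNReal.ofReal_le_ofReal
      (Real.rpow_sum_le_const_mul_sum_rpow_of_nonneg _ hα fun k _ => hs₀ k t)
  have hmeas (k : K) : Measurable fun t => ENNReal.ofReal (s k t ^ α) :=
    ((hs k).pow_const α).ennreal_ofReal
  calc SSEnergy α (fun t => ∑ k, s k t)
      ≤ ∫⁻ t, ENNReal.ofReal ((Fintype.card K : ℝ) ^ (α - 1)) *
          ∑ k, ENNReal.ofReal (s k t ^ α) := lintegral_mono hpow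
    _ = _ := by
      rw [lintegral_const_mul _ (Finset.measurable_sum _ fun k _ => hmeas k),
        lintegral_finsetSum _ fun k _ => hmeas k]
      rfl

theorem exists_ssFeasible_sum {ι K : Type*} [Fintype ι] [Fintype K] (J : SSInstance ι)
    (P : ι → K) (s : K → ℝ → ℝ) (σ : (k : K) → ℝ → Option {i // P i = k})
    (hfeas : ∀ k, SSFeasible (⟨fun i => J.r i.1, fun i => J.d i.1, fun i => J.w i.1⟩ :
      SSInstance {i // P i = k}) (s k) (σ k)) :
    ∃ σC : ℝ → Option ι, SSFeasible J (fun t => ∑ k, s k t) σC := by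
  classical
  have hs (k : K) : Measurable (s k) := (hfeas k).1
  have hs₀ (k : K) : ∀ t, 0 ≤ s k t := (hfeas k).2.2.1
  have hS : Measurable fun t => ∑ k, s k t := Finset.measurable_sum _ fun k _ => hs k
  have hS₀ (t : ℝ) : 0 ≤ ∑ k, s k t := Finset.sum_nonneg fun k _ => hs₀ k t
  let ν (k : K) : Measure ℝ := volume.withDensity fun t => ENNReal.ofReal (s k t)
  let A₀ (i : ι) : Set ℝ := {t | σ (P i) t = some ⟨i, rfl⟩}
  have hA₀ (i : ι) : MeasurableSet (A₀ i) :=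
    measurableSet_eq_fun (hfeas (P i)).2.1 measurable_const
  -- Carving needs finite targets. A job run with infinite work has Bochner integral `0`
  -- there, hence workload `≤ 0`, and can be left out.
  let A (i : ι) : Set ℝ := if ν (P i) (A₀ i) = ∞ then ∅ else A₀ i
  have hAA₀ (i : ι) : A i ⊆ A₀ i := by by_cases h : ν (P i) (A₀ i) = ∞ <;> simp [A, h]
  obtain ⟨B, hB, hBdisj⟩ := exists_pairwise_disjoint_subsets_measure_eq_of_sum_le
    (withDensity_ofReal_sum volume Finset.univ hs hs₀).ge (p := P) (A := A)
    (fun i => by by_cases h : ν (P i) (A₀ i) = ∞ <;> simp [A, h, hA₀ i])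
    (fun i j h hij => (disjoint_setOf_eq_some σ h hij).mono (hAA₀ i) (hAA₀ j))
    (fun i => by
      simp only [A]
      split_ifs with h
      exacts [by simp, h])
  obtain ⟨σC, hσC, hσCB⟩ := exists_measurable_preimage_some_eq (fun i => (hB i).2.1) hBdisj
  refine ⟨σC, hS, hσC, hS₀, fun i => ?_⟩
  obtain ⟨hA₀_sub, hw⟩ := (hfeas (P i)).2.2.2 ⟨i, rfl⟩
  rw [hσCB i]
  refine ⟨((hB i).1.trans (hAA₀ i)).trans hA₀_sub, ?_⟩
  rw [setIntegral_eq_toReal_withDensity (hs (P i)) (hs₀ (P i)) (hA₀ i)] at hw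
  by_cases h : ν (P i) (A₀ i) = ∞
  · rw [h, ENNReal.toReal_top] at hw
    exact hw.trans (setIntegral_nonneg (hB i).2.1 fun t _ => hS₀ t)
  · rwa [setIntegral_eq_toReal_withDensity hS hS₀ (hB i).2.1, (hB i).2.2,
      show A i = A₀ i from if_neg h]

theorem merge_schedules_general (α : ℝ) (hα : 1 < α) (n m : ℕ)
    (J : SSInstance (Fin n))
    (P : Fin n → Fin m)
    (s : Fin m → ℝ → ℝ) (σ : (k : Fin m) → ℝ → Option {i : Fin n // P i = k})
    (hfeas : ∀ k : Fin m,
      SSFeasible (⟨fun i => J.r i.1, fun i => J.d i.1, fun i => J.w i.1⟩ :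
        SSInstance {i : Fin n // P i = k}) (s k) (σ k)) :
    (∃ σC : ℝ → Option (Fin n), SSFeasible J (fun t => ∑ k, s k t) σC) ∧
      SSEnergy α (fun t => ∑ k, s k t)
        ≤ ENNReal.ofReal ((m : ℝ) ^ (α - 1)) * ∑ k, SSEnergy α (s k) := by
  refine ⟨exists_ssFeasible_sum J P s σ hfeas, ?_⟩
  simpa using ssEnergy_sum_le hα.le (fun k => (hfeas k).1) fun k => (hfeas k).2.2.1

/-- **Lemma `merge`.** If the job set of instance `J` is partitioned into `m` parts
(job `i` belongs to part `P i`) and `(s k, σ k)` is a feasible schedule for the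
sub-instance consisting of the jobs of part `k`, then there is a feasible schedule
for the whole instance `J` whose speed function is `t ↦ ∑ k, s k t`, and its energy
is at most `m^(α-1)` times the sum of the energies of the `m` schedules. -/
theorem merge_schedules (α : ℝ) (hα : 1 < α) (n m : ℕ) (hm : 1 ≤ m)
    (J : SSInstance (Fin n)) (hrd : ∀ i, J.r i < J.d i) (hw : ∀ i, 0 ≤ J.w i)
    (P : Fin n → Fin m)
    (s : Fin m → ℝ → ℝ) (σ : (k : Fin m) → ℝ → Option {i : Fin n // P i = k})
    (hfeas : ∀ k : Fin m,
      SSFeasible (⟨fun i => J.r i.1, fun i => J.d i.1, fun i => J.w i.1⟩ :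
        SSInstance {i : Fin n // P i = k}) (s k) (σ k)) :
    (∃ σC : ℝ → Option (Fin n), SSFeasible J (fun t => ∑ k, s k t) σC) ∧
      SSEnergy α (fun t => ∑ k, s k t)
        ≤ ENNReal.ofReal ((m : ℝ) ^ (α - 1)) * ∑ k, SSEnergy α (s k) :=
  merge_schedules_general α hα n m J P s σ hfeas
end

section
/- Existence of the waterfilling volumes (Lemma 'y_exist'): Let T be a finite nonempty set, let V : T → ℝ with V(t) ≥ 0 for all t, and let δ > 0, μ > 0, ℓ > 0 and w be reals with 0 ≤ w ≤ δ·|T|. Then there exist values y : T → ℝ with 0 ≤ y(t) ≤ δ for all t such that, setting X = w − Σ_{t ∈ T} y(t), for every t ∈ T: if y(t) = 0 then V(t)/μ ≥ X/ℓ; if 0 < y(t) < δ then (V(t) + y(t))/μ = X/ℓ; and if y(t) = δ then (V(t) + y(t))/μ ≤ X/ℓ. -/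
/-! The right parts are filled like communicating vessels: at water level `L` slot `t` receives
`L μ - V t` clamped to `[0, δ]`, which makes its right-part speed `(V t + y t) / μ` equal to `L`
unless the clamp is active. The left-part speed `(w - ∑ y) / ℓ` is continuous in `L`, equals
`w / ℓ ≥ 0` at level `0` (as `V ≥ 0`) and never exceeds `w / ℓ`, so the intermediate value
theorem yields a level `L ∈ [0, w / ℓ]` at which both speeds agree. -/

open Finset

section Clamp

variable {α : Type*} [LinearOrder α] {a b x : α}

lemma le_of_min_max_eq_left (hab : a < b) (h : min b (max a x) = a) : x ≤ a := by
  grind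

lemma min_max_eq_self (ha : a < min b (max a x)) (hb : min b (max a x) < b) :
    min b (max a x) = x := by
  grind

lemma le_of_min_max_eq_right (hab : a < b) (h : min b (max a x) = b) : b ≤ x := by
  grind

end Clamp

lemma exists_mem_Icc_apply_eq_self {F : ℝ → ℝ} (hF : Continuous F) {a b : ℝ} (hab : a ≤ b)
    (ha : a ≤ F a) (hb : F b ≤ b) : ∃ L ∈ Set.Icc a b, F L = L := by
  obtain ⟨L, hL, hFL⟩ := intermediate_value_Icc' hab (hF.sub continuous_id).continuousOn
    ⟨sub_nonpos.mpr hb, sub_nonneg.mpr ha⟩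
  exact ⟨L, hL, sub_eq_zero.mp hFL⟩

/-- The volume slot `t` receives when the right parts are raised to speed `L`. -/
def waterfill {T : Type*} (δ μ : ℝ) (V : T → ℝ) (L : ℝ) (t : T) : ℝ :=
  min δ (max 0 (L * μ - V t))

section Waterfill

variable {T : Type*} {δ μ : ℝ} {V : T → ℝ}

lemma waterfill_nonneg (hδ : 0 ≤ δ) (L : ℝ) (t : T) : 0 ≤ waterfill δ μ V L t :=
  le_min hδ (le_max_left _ _)

lemma waterfill_le (L : ℝ) (t : T) : waterfill δ μ V L t ≤ δ :=
  min_le_left _ _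

lemma waterfill_zero (hδ : 0 ≤ δ) (hV : ∀ t, 0 ≤ V t) (t : T) : waterfill δ μ V 0 t = 0 := by
  simp [waterfill, hV t, hδ]

lemma continuous_waterfill (t : T) : Continuous fun L => waterfill δ μ V L t := by
  unfold waterfill
  fun_prop

lemma exists_waterfill_level [Fintype T] (hδ : 0 ≤ δ) (hV : ∀ t, 0 ≤ V t) {ℓ w : ℝ}
    (hℓ : 0 < ℓ) (hw : 0 ≤ w) : ∃ L, (w - ∑ t, waterfill δ μ V L t) / ℓ = L := by
  have hcont : Continuous fun L => (w - ∑ t, waterfill δ μ V L t) / ℓ :=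
    (continuous_const.sub (continuous_finsetSum _ fun t _ => continuous_waterfill t)).div_const ℓ
  have hle : ∀ L, (w - ∑ t, waterfill δ μ V L t) / ℓ ≤ w / ℓ := fun L => by
    gcongr
    exact sub_le_self _ (sum_nonneg fun t _ => waterfill_nonneg hδ L t)
  have hw' : 0 ≤ w / ℓ := div_nonneg hw hℓ.le
  obtain ⟨L, -, hL⟩ := exists_mem_Icc_apply_eq_self hcont hw'
    (by simpa [waterfill_zero hδ hV] using hw') (hle _)
  exact ⟨L, hL⟩

end Waterfill

theorem y_exist_general {T : Type*} [Fintype T]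
    (V : T → ℝ) (hV : ∀ t, 0 ≤ V t)
    (δ μ ℓ w : ℝ) (hδ : 0 < δ) (hμ : 0 < μ) (hℓ : 0 < ℓ)
    (hw0 : 0 ≤ w) :
    ∃ y : T → ℝ, (∀ t, 0 ≤ y t ∧ y t ≤ δ) ∧
      (∀ t, (y t = 0 → (w - ∑ t', y t') / ℓ ≤ V t / μ) ∧
        (0 < y t → y t < δ → (V t + y t) / μ = (w - ∑ t', y t') / ℓ) ∧
        (y t = δ → (V t + y t) / μ ≤ (w - ∑ t', y t') / ℓ)) := by
  obtain ⟨L, hL⟩ := exists_waterfill_level (μ := μ) hδ.le hV hℓ hw0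
  refine ⟨waterfill δ μ V L, fun t => ⟨waterfill_nonneg hδ.le L t, waterfill_le L t⟩,
    fun t => ⟨fun h0 => ?_, fun hpos hlt => ?_, fun hfull => ?_⟩⟩ <;> rw [hL]
  · have := le_of_min_max_eq_left hδ h0
    rw [le_div_iff₀ hμ]
    linarith
  · have hfill : waterfill δ μ V L t = L * μ - V t := min_max_eq_self hpos hlt
    rw [hfill, div_eq_iff hμ.ne']
    ring
  · have := le_of_min_max_eq_right hδ hfull
    rw [hfull, div_le_iff₀ hμ]
    linarith

/-- **Lemma `y_exist`.** Existence of the waterfilling volumes: there are values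
`0 ≤ y t ≤ δ` such that, with `X = w - ∑ t, y t`, every slot `t` with `y t = 0` has
right-part speed `V t / μ` at least `X / ℓ`, every slot with `0 < y t < δ` has
`(V t + y t) / μ = X / ℓ`, and every slot with `y t = δ` has `(V t + y t) / μ ≤ X / ℓ`. -/
theorem y_exist {T : Type*} [Fintype T] [Nonempty T]
    (V : T → ℝ) (hV : ∀ t, 0 ≤ V t)
    (δ μ ℓ w : ℝ) (hδ : 0 < δ) (hμ : 0 < μ) (hℓ : 0 < ℓ)
    (hw0 : 0 ≤ w) (hwδ : w ≤ δ * Fintype.card T) :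
    ∃ y : T → ℝ, (∀ t, 0 ≤ y t ∧ y t ≤ δ) ∧
      (∀ t, (y t = 0 → (w - ∑ t', y t') / ℓ ≤ V t / μ) ∧
        (0 < y t → y t < δ → (V t + y t) / μ = (w - ∑ t', y t') / ℓ) ∧
        (y t = δ → (V t + y t) / μ ≤ (w - ∑ t', y t') / ℓ)) :=
  y_exist_general V hV δ μ ℓ w hδ hμ hℓ hw0
end

section
/- Per-job consistency inequality (key step of Lemma 'general-consistency'): Let α > 1, μ > 0 and ℓ > 0 be reals, T a finite set, X ≥ 0 a real, and y, V : T → ℝ with y(t) ≥ 0 and V(t) ≥ 0 for all t ∈ T. Set w = X + Σ_{t ∈ T} y(t). If (V(t) + y(t))/μ ≤ X/ℓ for every t ∈ T with y(t) > 0, then X^α/ℓ^(α−1) + Σ_{t ∈ T} ((V(t) + y(t))^α − V(t)^α)/μ^(α−1) ≤ w^α/ℓ^(α−1). -/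
/-!
Both sides are compared through the tangent lines of the convex function `x ↦ x ^ α`. The increment
`(V + y)^α - V^α` of a right part is at most `α y (V + y)^(α-1)`, and the hypothesis bounds
`((V + y)/μ)^(α-1)` by `(X/ℓ)^(α-1)`, so the right-hand sum is at most `α (∑ y) (X/ℓ)^(α-1)`.
Adding `X^α/ℓ^(α-1)` gives `(X^α + α (∑ y) X^(α-1))/ℓ^(α-1)`, which the tangent at `X` bounds by
`(X + ∑ y)^α/ℓ^(α-1)`.
-/

open Finset

namespace Real

variable {p : ℝ}

lemma rpow_add_mul_sub_le_rpow (hp : 1 < p) {x y : ℝ} (hx : 0 ≤ x) (hy : 0 ≤ y) :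
    y ^ p + p * y ^ (p - 1) * (x - y) ≤ x ^ p := by
  rcases hy.eq_or_lt with rfl | hy
  · simp [zero_rpow (by linarith : p ≠ 0), zero_rpow (by linarith : p - 1 ≠ 0)]
    positivity
  have hbernoulli := one_add_mul_self_le_rpow_one_add (by linarith [div_nonneg hx hy.le] :
    -1 ≤ x / y - 1) hp.le
  rw [add_sub_cancel, div_rpow hx hy.le, le_div_iff₀ (rpow_pos_of_pos hy p)] at hbernoulli
  calc y ^ p + p * y ^ (p - 1) * (x - y)
      = (1 + p * (x / y - 1)) * y ^ p := by
        rw [rpow_sub_one hy.ne']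
        field_simp
    _ ≤ x ^ p := hbernoulli

lemma rpow_add_sub_rpow_le (hp : 1 < p) {a b : ℝ} (ha : 0 ≤ a) (hb : 0 ≤ b) :
    (a + b) ^ p - a ^ p ≤ p * b * (a + b) ^ (p - 1) := by
  have := rpow_add_mul_sub_le_rpow hp ha (add_nonneg ha hb)
  linarith

lemma rpow_add_mul_mul_rpow_le (hp : 1 < p) {a b : ℝ} (ha : 0 ≤ a) (hb : 0 ≤ b) :
    a ^ p + p * b * a ^ (p - 1) ≤ (a + b) ^ p := by
  have := rpow_add_mul_sub_le_rpow hp (add_nonneg ha hb) ha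
  linarith

lemma rpow_add_sub_rpow_div_le (hp : 1 < p) {μ c a b : ℝ} (hμ : 0 < μ) (ha : 0 ≤ a) (hb : 0 ≤ b)
    (h : (a + b) / μ ≤ c) :
    ((a + b) ^ p - a ^ p) / μ ^ (p - 1) ≤ p * b * c ^ (p - 1) :=
  calc ((a + b) ^ p - a ^ p) / μ ^ (p - 1)
      ≤ p * b * (a + b) ^ (p - 1) / μ ^ (p - 1) := by
        gcongr
        exact rpow_add_sub_rpow_le hp ha hb
    _ = p * b * ((a + b) / μ) ^ (p - 1) := by rw [div_rpow (by positivity) hμ.le, mul_div_assoc]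
    _ ≤ p * b * c ^ (p - 1) := by gcongr

end Real

open Real in
/-- **Per-job consistency inequality** (key step of Lemma `general-consistency`):
if `(V t + y t)/μ ≤ X/ℓ` whenever `y t > 0`, then, with `w = X + ∑ t, y t`,
`X^α/ℓ^(α-1) + ∑ t, ((V t + y t)^α - (V t)^α)/μ^(α-1) ≤ w^α/ℓ^(α-1)`. -/
theorem per_job_consistency (α μ ℓ : ℝ) (hα : 1 < α) (hμ : 0 < μ) (hℓ : 0 < ℓ)
    {T : Type*} [Fintype T] (X : ℝ) (hX : 0 ≤ X) (y V : T → ℝ)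
    (hy : ∀ t, 0 ≤ y t) (hV : ∀ t, 0 ≤ V t)
    (h : ∀ t, 0 < y t → (V t + y t) / μ ≤ X / ℓ) :
    X ^ α / ℓ ^ (α - 1) + ∑ t : T, ((V t + y t) ^ α - V t ^ α) / μ ^ (α - 1)
      ≤ (X + ∑ t : T, y t) ^ α / ℓ ^ (α - 1) := by
  have hterm (t : T) :
      ((V t + y t) ^ α - V t ^ α) / μ ^ (α - 1) ≤ α * y t * (X / ℓ) ^ (α - 1) := by
    rcases (hy t).eq_or_lt with hyt | hyt
    · simp [← hyt]
    · exact rpow_add_sub_rpow_div_le hα hμ (hV t) (hy t) (h t hyt)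
  calc X ^ α / ℓ ^ (α - 1) + ∑ t : T, ((V t + y t) ^ α - V t ^ α) / μ ^ (α - 1)
      ≤ X ^ α / ℓ ^ (α - 1) + α * (∑ t : T, y t) * (X / ℓ) ^ (α - 1) := by
        rw [mul_sum, sum_mul]
        gcongr with t
        exact hterm t
    _ = (X ^ α + α * (∑ t : T, y t) * X ^ (α - 1)) / ℓ ^ (α - 1) := by
        rw [div_rpow hX hℓ.le]
        ring
    _ ≤ (X + ∑ t : T, y t) ^ α / ℓ ^ (α - 1) := by
        gcongr
        exact rpow_add_mul_mul_rpow_le hα hX (sum_nonneg fun t _ => hy t)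
end

section
/- Aggregate consistency inequality (Lemma 'general-consistency', combinatorial core): Let α > 1 and μ > 0 be reals, n ≥ 1, and T a finite set. For each j ∈ {1, …, n} let T_j ⊆ T, let ℓ_j > 0 and X_j ≥ 0 be reals, and let y_j : T_j → ℝ with y_j(t) ≥ 0; set w_j = X_j + Σ_{t ∈ T_j} y_j(t). For t ∈ T and j ∈ {1, …, n+1} define V_t(j) = Σ_{j' < j with t ∈ T_{j'}} y_{j'}(t). Assume that for every j and every t ∈ T_j with y_j(t) > 0 one has (V_t(j) + y_j(t))/μ ≤ X_j/ℓ_j. Then Σ_{j=1}^n X_j^α/ℓ_j^(α−1) + Σ_{t ∈ T} V_t(n+1)^α/μ^(α−1) ≤ Σ_{j=1}^n w_j^α/ℓ_j^(α−1). -/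
/-!
The term `V_t(n+1)^α` telescopes into the increments `V_t(j+1)^α - V_t(j)^α`, and by convexity of
`x ↦ x^α` the increment caused by job `j` is at most `α (V_t(j) + y_j(t))^(α-1) y_j(t)`, which the
consistency hypothesis bounds by `α (μ X_j/ℓ_j)^(α-1) y_j(t)`. Summing over `t` and dividing by
`μ^(α-1)` charges job `j` with `α (X_j/ℓ_j)^(α-1) Σ_t y_j(t)`, and this plus `X_j^α/ℓ_j^(α-1)` is
at most `w_j^α/ℓ_j^(α-1)`, again by the tangent-line inequality for `x^α`, now at `X_j`.
-/

open Finset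

theorem Real.rpow_tangent_le {p x c : ℝ} (hp : 1 ≤ p) (hx : 0 ≤ x) (hc : 0 ≤ c) :
    c ^ p + p * c ^ (p - 1) * (x - c) ≤ x ^ p := by
  rcases hc.eq_or_lt with rfl | hc
  · rcases hp.eq_or_lt with rfl | hp
    · simp
    · simp [Real.zero_rpow (by linarith : p ≠ 0), Real.zero_rpow (by linarith : p - 1 ≠ 0),
        Real.rpow_nonneg hx]
  have hs : -1 ≤ (x - c) / c := by
    rw [le_div_iff₀ hc]; linarith
  have hxc : x = c * (1 + (x - c) / c) := by field_simp; ring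
  calc c ^ p + p * c ^ (p - 1) * (x - c) = c ^ p * (1 + p * ((x - c) / c)) := by
        rw [Real.rpow_sub_one hc.ne']; field_simp
    _ ≤ c ^ p * (1 + (x - c) / c) ^ p :=
        mul_le_mul_of_nonneg_left (one_add_mul_self_le_rpow_one_add hs hp) (by positivity)
    _ = x ^ p := by
        rw [← Real.mul_rpow hc.le (by linarith), ← hxc]

theorem Real.add_rpow_sub_rpow_le {p a b c : ℝ} (hp : 1 ≤ p) (ha : 0 ≤ a) (hb : 0 ≤ b)
    (hc : a + b ≤ c) : (a + b) ^ p - a ^ p ≤ p * c ^ (p - 1) * b := by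
  have hab : 0 ≤ a + b := add_nonneg ha hb
  have htangent := Real.rpow_tangent_le hp ha hab
  have hmono : (a + b) ^ (p - 1) ≤ c ^ (p - 1) := Real.rpow_le_rpow hab hc (by linarith)
  nlinarith [mul_le_mul_of_nonneg_right hmono hb]

theorem Real.rpow_div_rpow_add_le {p X ℓ S : ℝ} (hp : 1 ≤ p) (hX : 0 ≤ X) (hℓ : 0 < ℓ)
    (hS : 0 ≤ S) :
    X ^ p / ℓ ^ (p - 1) + p * (X / ℓ) ^ (p - 1) * S ≤ (X + S) ^ p / ℓ ^ (p - 1) := by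
  have hℓp : 0 < ℓ ^ (p - 1) := Real.rpow_pos_of_pos hℓ _
  have htangent := Real.rpow_tangent_le hp (add_nonneg hX hS) hX
  rw [Real.div_rpow hX hℓ.le, le_div_iff₀ hℓp]
  field_simp
  linarith

section PrefixVolume

variable {n : ℕ} {T : Type*} [DecidableEq T] (Tj : Fin n → Finset T) (y : Fin n → T → ℝ)

/-- `prefixVolume Tj y k t` is the paper's `V_t(k + 1)`: jobs are indexed from `0`, so the
first `k` jobs are those with index `< k`. -/
def prefixVolume (k : ℕ) (t : T) : ℝ :=
  ∑ j ∈ univ.filter (fun j : Fin n => (j : ℕ) < k ∧ t ∈ Tj j), y j t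

@[simp]
theorem prefixVolume_zero (t : T) : prefixVolume Tj y 0 t = 0 := by
  simp [prefixVolume]

theorem prefixVolume_of_le {k : ℕ} (hk : n ≤ k) (t : T) :
    prefixVolume Tj y k t = ∑ j ∈ univ.filter (fun j : Fin n => t ∈ Tj j), y j t := by
  unfold prefixVolume
  congr 1
  ext j
  simp only [mem_filter, mem_univ, true_and, and_iff_right_iff_imp]
  exact fun _ => j.is_lt.trans_le hk

theorem prefixVolume_val (j : Fin n) (t : T) :
    prefixVolume Tj y j t = ∑ j' ∈ univ.filter (fun j' : Fin n => j' < j ∧ t ∈ Tj j'), y j' t :=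
  rfl

theorem prefixVolume_succ (j : Fin n) (t : T) :
    prefixVolume Tj y (j + 1) t = prefixVolume Tj y j t + if t ∈ Tj j then y j t else 0 := by
  simp only [prefixVolume, sum_filter]
  rw [← Fintype.sum_ite_eq' j (fun j => if t ∈ Tj j then y j t else 0), ← sum_add_distrib]
  refine sum_congr rfl fun j' _ => ?_
  rcases lt_trichotomy j' j with h | rfl | h
  · have : (j' : ℕ) < j := h
    simp [this, h.ne, Nat.lt_succ_of_lt this]
  · simp
  · have : (j : ℕ) < j' := h
    simp [h.ne', show ¬ (j' : ℕ) < j by omega, show ¬ (j' : ℕ) < j + 1 by omega]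

theorem prefixVolume_nonneg (hy : ∀ j, ∀ t ∈ Tj j, 0 ≤ y j t) (k : ℕ) (t : T) :
    0 ≤ prefixVolume Tj y k t :=
  sum_nonneg fun j hj => hy j t (mem_filter.1 hj).2.2

variable [Fintype T]

theorem sum_rpow_prefixVolume_eq_sum_sub {α : ℝ} (hα : α ≠ 0) :
    ∑ t, (∑ j ∈ univ.filter (fun j : Fin n => t ∈ Tj j), y j t) ^ α =
      ∑ j : Fin n, ∑ t, (prefixVolume Tj y (j + 1) t ^ α - prefixVolume Tj y j t ^ α) := by
  rw [Fin.sum_univ_eq_sum_range (fun k => ∑ t, (prefixVolume Tj y (k + 1) t ^ α -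
    prefixVolume Tj y k t ^ α)), sum_comm]
  refine sum_congr rfl fun t _ => ?_
  rw [sum_range_sub (fun k => prefixVolume Tj y k t ^ α), prefixVolume_of_le Tj y le_rfl,
    prefixVolume_zero, Real.zero_rpow hα, sub_zero]

theorem sum_rpow_prefixVolume_succ_sub_le {α c : ℝ} (hα : 1 ≤ α)
    (hy : ∀ j, ∀ t ∈ Tj j, 0 ≤ y j t) (j : Fin n)
    (hc : ∀ t ∈ Tj j, 0 < y j t → prefixVolume Tj y j t + y j t ≤ c) :
    ∑ t, (prefixVolume Tj y (j + 1) t ^ α - prefixVolume Tj y j t ^ α) ≤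
      α * c ^ (α - 1) * ∑ t ∈ Tj j, y j t := by
  rw [mul_sum, ← sum_filter_add_sum_filter_not univ (· ∈ Tj j), filter_mem_eq_inter,
    univ_inter]
  refine add_le_of_le_of_nonpos (sum_le_sum fun t ht => ?_) (sum_nonpos fun t ht => ?_)
  · rw [prefixVolume_succ, if_pos ht]
    rcases (hy j t ht).eq_or_lt with hzero | hpos
    · simp [← hzero]
    · exact Real.add_rpow_sub_rpow_le hα (prefixVolume_nonneg Tj y hy j t) hpos.le
        (hc t ht hpos)
  · rw [prefixVolume_succ, if_neg (mem_filter.1 ht).2, add_zero, sub_self]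

end PrefixVolume

theorem aggregate_consistency_general (α μ : ℝ) (hα : 1 < α) (hμ : 0 < μ)
    (n : ℕ) {T : Type*} [Fintype T] [DecidableEq T]
    (Tj : Fin n → Finset T) (ℓ X : Fin n → ℝ) (y : Fin n → T → ℝ)
    (hℓ : ∀ j, 0 < ℓ j) (hX : ∀ j, 0 ≤ X j) (hy : ∀ j, ∀ t ∈ Tj j, 0 ≤ y j t)
    (hmain : ∀ j, ∀ t ∈ Tj j, 0 < y j t →
      ((∑ j' ∈ univ.filter (fun j' : Fin n => j' < j ∧ t ∈ Tj j'), y j' t) + y j t) / μ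
        ≤ X j / ℓ j) :
    ∑ j : Fin n, X j ^ α / ℓ j ^ (α - 1)
      + ∑ t : T, (∑ j' ∈ univ.filter (fun j' : Fin n => t ∈ Tj j'), y j' t) ^ α / μ ^ (α - 1)
      ≤ ∑ j : Fin n, (X j + ∑ t ∈ Tj j, y j t) ^ α / ℓ j ^ (α - 1) := by
  have hμα : 0 < μ ^ (α - 1) := Real.rpow_pos_of_pos hμ _
  have hjob : ∀ j : Fin n, (∑ t, (prefixVolume Tj y (j + 1) t ^ α - prefixVolume Tj y j t ^ α)) /
      μ ^ (α - 1) ≤ α * (X j / ℓ j) ^ (α - 1) * ∑ t ∈ Tj j, y j t := by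
    intro j
    have hq : 0 ≤ X j / ℓ j := div_nonneg (hX j) (hℓ j).le
    rw [div_le_iff₀ hμα]
    calc _ ≤ α * (μ * (X j / ℓ j)) ^ (α - 1) * ∑ t ∈ Tj j, y j t :=
          sum_rpow_prefixVolume_succ_sub_le Tj y hα.le hy j fun t ht hpos => by
            rw [prefixVolume_val, ← div_le_iff₀' hμ]; exact hmain j t ht hpos
      _ = _ := by rw [Real.mul_rpow hμ.le hq]; ring
  calc _ = ∑ j : Fin n, (X j ^ α / ℓ j ^ (α - 1) + (∑ t, (prefixVolume Tj y (j + 1) t ^ α -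
          prefixVolume Tj y j t ^ α)) / μ ^ (α - 1)) := by
        rw [← sum_div, sum_rpow_prefixVolume_eq_sum_sub Tj y (by linarith), sum_div,
          sum_add_distrib]
    _ ≤ ∑ j : Fin n, (X j ^ α / ℓ j ^ (α - 1) + α * (X j / ℓ j) ^ (α - 1) * ∑ t ∈ Tj j, y j t) :=
        sum_le_sum fun j _ => add_le_add_right (hjob j) _
    _ ≤ _ := sum_le_sum fun j _ => Real.rpow_div_rpow_add_le hα.le (hX j) (hℓ j)
        (sum_nonneg (hy j))

/-- **Aggregate consistency inequality** (combinatorial core of Lemma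
`general-consistency`): jobs `j : Fin n` arrive in order, job `j` has slot set `Tj j`,
left-part volume `X j`, reserved left-part length `ℓ j`, and right-part volumes
`y j t`; `V_t(j) = ∑_{j' < j, t ∈ Tj j'} y j' t` is the right-part volume of slot `t`
before job `j` arrives.  If `(V_t(j) + y j t)/μ ≤ X j / ℓ j` whenever `y j t > 0`, then
`∑ j, (X j)^α/(ℓ j)^(α-1) + ∑ t, V_t(n+1)^α/μ^(α-1) ≤ ∑ j, (w j)^α/(ℓ j)^(α-1)`,
where `w j = X j + ∑_{t ∈ Tj j} y j t`. -/
theorem aggregate_consistency (α μ : ℝ) (hα : 1 < α) (hμ : 0 < μ)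
    (n : ℕ) (hn : 1 ≤ n) {T : Type*} [Fintype T] [DecidableEq T]
    (Tj : Fin n → Finset T) (ℓ X : Fin n → ℝ) (y : Fin n → T → ℝ)
    (hℓ : ∀ j, 0 < ℓ j) (hX : ∀ j, 0 ≤ X j) (hy : ∀ j, ∀ t ∈ Tj j, 0 ≤ y j t)
    (hmain : ∀ j, ∀ t ∈ Tj j, 0 < y j t →
      ((∑ j' ∈ univ.filter (fun j' : Fin n => j' < j ∧ t ∈ Tj j'), y j' t) + y j t) / μ
        ≤ X j / ℓ j) :
    ∑ j : Fin n, X j ^ α / ℓ j ^ (α - 1)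
      + ∑ t : T, (∑ j' ∈ univ.filter (fun j' : Fin n => t ∈ Tj j'), y j' t) ^ α / μ ^ (α - 1)
      ≤ ∑ j : Fin n, (X j + ∑ t ∈ Tj j, y j t) ^ α / ℓ j ^ (α - 1) :=
  aggregate_consistency_general α μ hα hμ n Tj ℓ X y hℓ hX hy hmain
end

section
/- Aggregate robustness inequality (Lemma 'general-robustness', combinatorial core): Let α > 1 and μ > 0 be reals, n ≥ 1, and T a finite set. For each j ∈ {1, …, n} let T_j ⊆ T be nonempty, let δ_j > 0 and ℓ_j > 0 be reals, and let y_j : T_j → ℝ with 0 ≤ y_j(t) ≤ δ_j for all t ∈ T_j; set X_j = Σ_{t ∈ T_j} (δ_j − y_j(t)), and for t ∈ T set V(t) = Σ_{j with t ∈ T_j} y_j(t). Assume that for every j and every t ∈ T_j with y_j(t) < δ_j one has X_j/ℓ_j ≤ V(t)/μ. Then Σ_{j=1}^n X_j^α/ℓ_j^(α−1) + Σ_{t ∈ T} V(t)^α/μ^(α−1) ≤ Σ_{t ∈ T} (Σ_{j with t ∈ T_j} δ_j)^α/μ^(α−1). -/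
/-!
Write `X_j^α / ℓ_j^(α-1) = (X_j/ℓ_j)^(α-1) · X_j` and split `X_j` over the slots of job `j`
into the pieces `δ_j - y_j(t)`. Each piece with `y_j(t) < δ_j` is charged at rate
`(X_j/ℓ_j)^(α-1) ≤ (V(t)/μ)^(α-1)`, so after exchanging the sums, slot `t` receives at most
`(V(t)/μ)^(α-1) (D(t) - V(t))`, where `D(t) = ∑_{j : t ∈ T_j} δ_j`. Together with its own
`V(t)^α/μ^(α-1) = (V(t)/μ)^(α-1) V(t)` this is `(V(t)/μ)^(α-1) D(t) ≤ D(t)^α/μ^(α-1)`.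
-/

open Finset

lemma Real.rpow_div_rpow_sub_one {x l α : ℝ} (hx : 0 ≤ x) (hl : 0 ≤ l) (hα : α ≠ 0) :
    x ^ α / l ^ (α - 1) = (x / l) ^ (α - 1) * x := by
  rw [Real.div_rpow hx hl, div_mul_eq_mul_div, ← Real.rpow_add_one' hx (by simpa using hα),
    sub_add_cancel]

lemma rpow_div_add_mul_le {v d μ α : ℝ} (hv : 0 ≤ v) (hvd : v ≤ d) (hμ : 0 ≤ μ) (hα : 1 ≤ α) :
    v ^ α / μ ^ (α - 1) + (v / μ) ^ (α - 1) * (d - v) ≤ d ^ α / μ ^ (α - 1) := by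
  have hα₀ : α ≠ 0 := by positivity
  have hd : 0 ≤ d := hv.trans hvd
  rw [Real.rpow_div_rpow_sub_one hv hμ hα₀, Real.rpow_div_rpow_sub_one hd hμ hα₀, ← mul_add,
    add_sub_cancel]
  gcongr

lemma rpow_sum_div_le_sum_mul {ι : Type*} {s : Finset ι} {w σ : ι → ℝ} {ℓ α : ℝ}
    (hℓ : 0 ≤ ℓ) (hα : 1 ≤ α) (hw : ∀ t ∈ s, 0 ≤ w t)
    (hσ : ∀ t ∈ s, 0 < w t → (∑ t ∈ s, w t) / ℓ ≤ σ t) :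
    (∑ t ∈ s, w t) ^ α / ℓ ^ (α - 1) ≤ ∑ t ∈ s, σ t ^ (α - 1) * w t := by
  have hX : 0 ≤ ∑ t ∈ s, w t := sum_nonneg hw
  rw [Real.rpow_div_rpow_sub_one hX hℓ (by positivity), mul_sum]
  refine sum_le_sum fun t ht => ?_
  rcases (hw t ht).eq_or_lt with h0 | hpos
  · simp [← h0]
  · have hrate := hσ t ht hpos
    gcongr

theorem aggregate_robustness_general (α μ : ℝ) (hα : 1 < α) (hμ : 0 < μ)
    (n : ℕ) {T : Type*} [Fintype T] [DecidableEq T]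
    (Tj : Fin n → Finset T)
    (δ ℓ : Fin n → ℝ) (hℓ : ∀ j, 0 < ℓ j)
    (y : Fin n → T → ℝ) (hy : ∀ j, ∀ t ∈ Tj j, 0 ≤ y j t ∧ y j t ≤ δ j)
    (hmain : ∀ j, ∀ t ∈ Tj j, y j t < δ j →
      (∑ t' ∈ Tj j, (δ j - y j t')) / ℓ j
        ≤ (∑ j' ∈ univ.filter (fun j' : Fin n => t ∈ Tj j'), y j' t) / μ) :
    ∑ j : Fin n, (∑ t' ∈ Tj j, (δ j - y j t')) ^ α / ℓ j ^ (α - 1)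
      + ∑ t : T, (∑ j' ∈ univ.filter (fun j' : Fin n => t ∈ Tj j'), y j' t) ^ α / μ ^ (α - 1)
      ≤ ∑ t : T, (∑ j' ∈ univ.filter (fun j' : Fin n => t ∈ Tj j'), δ j') ^ α / μ ^ (α - 1) := by
  set jobs : T → Finset (Fin n) := fun t => univ.filter fun j => t ∈ Tj j
  have hy' : ∀ t, ∀ j ∈ jobs t, 0 ≤ y j t ∧ y j t ≤ δ j := fun t j hj =>
    hy j t (mem_filter.1 hj).2
  set V : T → ℝ := fun t => ∑ j ∈ jobs t, y j t
  set charge : Fin n → T → ℝ := fun j t => (V t / μ) ^ (α - 1) * (δ j - y j t)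
  have hjob : ∀ j, (∑ t' ∈ Tj j, (δ j - y j t')) ^ α / ℓ j ^ (α - 1) ≤ ∑ t ∈ Tj j, charge j t :=
    fun j => rpow_sum_div_le_sum_mul (hℓ j).le hα.le (fun t ht => sub_nonneg.2 (hy j t ht).2)
      fun t ht hpos => hmain j t ht (sub_pos.1 hpos)
  have hswap : ∑ j, ∑ t ∈ Tj j, charge j t = ∑ t, ∑ j ∈ jobs t, charge j t :=
    sum_comm' fun j t => by simp [jobs]
  have hslot : ∀ t, V t ^ α / μ ^ (α - 1) + ∑ j ∈ jobs t, charge j t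
      ≤ (∑ j ∈ jobs t, δ j) ^ α / μ ^ (α - 1) := fun t => by
    simp only [charge, ← mul_sum, sum_sub_distrib]
    exact rpow_div_add_mul_le (sum_nonneg fun j hj => (hy' t j hj).1)
      (sum_le_sum fun j hj => (hy' t j hj).2) hμ.le hα.le
  calc _ ≤ ∑ t, ∑ j ∈ jobs t, charge j t + ∑ t, V t ^ α / μ ^ (α - 1) := by
        rw [← hswap]; gcongr with j; exact hjob j
    _ ≤ _ := by rw [add_comm, ← sum_add_distrib]; exact sum_le_sum fun t _ => hslot t

/-- **Aggregate robustness inequality** (combinatorial core of Lemma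
`general-robustness`): job `j` has nonempty slot set `Tj j`, density `δ j`, reserved
left-part length `ℓ j` and right-part volumes `0 ≤ y j t ≤ δ j`; its left-part volume
is `X j = ∑_{t ∈ Tj j} (δ j - y j t)` and `V t = ∑_{j : t ∈ Tj j} y j t` is the total
right-part volume of slot `t`.  If `X j / ℓ j ≤ V t / μ` whenever `y j t < δ j`, then
`∑ j, (X j)^α/(ℓ j)^(α-1) + ∑ t, (V t)^α/μ^(α-1) ≤ ∑ t, (∑_{j : t ∈ Tj j} δ j)^α/μ^(α-1)`. -/
theorem aggregate_robustness (α μ : ℝ) (hα : 1 < α) (hμ : 0 < μ)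
    (n : ℕ) (hn : 1 ≤ n) {T : Type*} [Fintype T] [DecidableEq T]
    (Tj : Fin n → Finset T) (hTj : ∀ j, (Tj j).Nonempty)
    (δ ℓ : Fin n → ℝ) (hδ : ∀ j, 0 < δ j) (hℓ : ∀ j, 0 < ℓ j)
    (y : Fin n → T → ℝ) (hy : ∀ j, ∀ t ∈ Tj j, 0 ≤ y j t ∧ y j t ≤ δ j)
    (hmain : ∀ j, ∀ t ∈ Tj j, y j t < δ j →
      (∑ t' ∈ Tj j, (δ j - y j t')) / ℓ j
        ≤ (∑ j' ∈ univ.filter (fun j' : Fin n => t ∈ Tj j'), y j' t) / μ) :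
    ∑ j : Fin n, (∑ t' ∈ Tj j, (δ j - y j t')) ^ α / ℓ j ^ (α - 1)
      + ∑ t : T, (∑ j' ∈ univ.filter (fun j' : Fin n => t ∈ Tj j'), y j' t) ^ α / μ ^ (α - 1)
      ≤ ∑ t : T, (∑ j' ∈ univ.filter (fun j' : Fin n => t ∈ Tj j'), δ j') ^ α / μ ^ (α - 1) :=
  aggregate_robustness_general α μ hα hμ n Tj δ ℓ hℓ y hy hmain
end
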